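/- arXiv:2403.16843 — 6 statements merged into one kernel-verified Lean document; each statement's English description precedes it below -/
import Mathlib

section
/- For any d, Δ ∈ ℕ+ and any vectors ℓ_1, …, ℓ_Δ ∈ ℝ^d, min_{j ∈ [d]} Σ_{t=1}^Δ ℓ_t(j) − Σ_{t=1}^Δ min_{j ∈ [d]} ℓ_t(j) ≤ 2Δ · Σ_{t=1}^{Δ−1} ‖ℓ_{t+1} − ℓ_t‖_∞. -/
/-!
Fix a best action `j₀` of the reference round `ℓ 0`. In every round `t`, playing `j₀` instead of
the round's own best action costs at most `2 ‖ℓ t - ℓ 0‖`, since both `ℓ t j₀` and the minimum of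
`ℓ t` are within `‖ℓ t - ℓ 0‖` of the minimum of `ℓ 0`. Summing over the window, and bounding each
`‖ℓ t - ℓ 0‖` by the total variation through the triangle inequality, gives the factor `2Δ`.
-/

open Finset

theorem norm_sub_le_sum_range_norm_sub {E : Type*} [SeminormedAddCommGroup E] (f : ℕ → E)
    {t n : ℕ} (htn : t ≤ n) :
    ‖f t - f 0‖ ≤ ∑ s ∈ range n, ‖f (s + 1) - f s‖ :=
  calc ‖f t - f 0‖ = dist (f 0) (f t) := (dist_eq_norm_sub' _ _).symm
    _ ≤ ∑ s ∈ range t, dist (f s) (f (s + 1)) := dist_le_range_sum_dist f t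
    _ = ∑ s ∈ range t, ‖f (s + 1) - f s‖ := by simp only [dist_eq_norm_sub']
    _ ≤ ∑ s ∈ range n, ‖f (s + 1) - f s‖ :=
      sum_le_sum_of_subset_of_nonneg (range_subset_range.mpr htn) fun _ _ _ => norm_nonneg _

section BestAction

variable {ι : Type*} [Fintype ι]

theorem apply_sub_iInf_le_two_mul_norm_sub {f g : ι → ℝ} {j₀ : ι} (hj₀ : ∀ j, g j₀ ≤ g j) :
    f j₀ - ⨅ j, f j ≤ 2 * ‖f - g‖ := by
  have hf_le : f j₀ ≤ g j₀ + ‖f - g‖ := by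
    have := norm_le_pi_norm (f - g) j₀
    rw [Pi.sub_apply, Real.norm_eq_abs, abs_le] at this
    linarith
  have : Nonempty ι := ⟨j₀⟩
  have hle_iInf : g j₀ - ‖f - g‖ ≤ ⨅ j, f j := le_ciInf fun j => by
    have := norm_le_pi_norm (f - g) j
    rw [Pi.sub_apply, Real.norm_eq_abs, abs_le] at this
    linarith [hj₀ j]
  linarith

theorem iInf_sum_sub_sum_iInf_le [Nonempty ι] {α : Type*} (s : Finset α) (f : α → ι → ℝ)
    (g : ι → ℝ) :
    (⨅ j, ∑ t ∈ s, f t j) - ∑ t ∈ s, ⨅ j, f t j ≤ 2 * ∑ t ∈ s, ‖f t - g‖ := by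
  obtain ⟨j₀, hj₀⟩ := Finite.exists_min g
  calc (⨅ j, ∑ t ∈ s, f t j) - ∑ t ∈ s, ⨅ j, f t j
      ≤ ∑ t ∈ s, f t j₀ - ∑ t ∈ s, ⨅ j, f t j :=
        sub_le_sub_right (ciInf_le (Finite.bddBelow_range _) j₀) _
    _ = ∑ t ∈ s, (f t j₀ - ⨅ j, f t j) := (sum_sub_distrib _ _).symm
    _ ≤ ∑ t ∈ s, 2 * ‖f t - g‖ := sum_le_sum fun t _ => apply_sub_iInf_le_two_mul_norm_sub hj₀
    _ = 2 * ∑ t ∈ s, ‖f t - g‖ := (mul_sum _ _ _).symm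

end BestAction

theorem stmt_4_general (d Δ : ℕ) (hd : 0 < d) (ℓ : ℕ → Fin d → ℝ) :
    (⨅ j : Fin d, ∑ t ∈ range Δ, ℓ t j) - ∑ t ∈ range Δ, ⨅ j : Fin d, ℓ t j ≤
      2 * Δ * ∑ t ∈ range (Δ - 1), ‖ℓ (t + 1) - ℓ t‖ := by
  have : Nonempty (Fin d) := ⟨⟨0, hd⟩⟩
  set V := ∑ t ∈ range (Δ - 1), ‖ℓ (t + 1) - ℓ t‖
  have hdrift : ∑ t ∈ range Δ, ‖ℓ t - ℓ 0‖ ≤ Δ * V := by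
    calc ∑ t ∈ range Δ, ‖ℓ t - ℓ 0‖ ≤ ∑ _t ∈ range Δ, V :=
          sum_le_sum fun t ht =>
            norm_sub_le_sum_range_norm_sub ℓ (Nat.le_sub_one_of_lt (mem_range.mp ht))
      _ = Δ * V := by rw [sum_const, card_range, nsmul_eq_mul]
  calc _ ≤ 2 * ∑ t ∈ range Δ, ‖ℓ t - ℓ 0‖ := iInf_sum_sub_sum_iInf_le _ ℓ (ℓ 0)
    _ ≤ 2 * Δ * V := by linarith

/-- Within a window of `Δ` rounds, the gap between the best fixed action in hindsight and
the per-round best actions is bounded by `2Δ` times the total variation of the losses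
(in sup-norm) within the window. -/
theorem stmt_4 (d Δ : ℕ) (hd : 0 < d) (hΔ : 0 < Δ) (ℓ : ℕ → Fin d → ℝ) :
    (⨅ j : Fin d, ∑ t ∈ range Δ, ℓ t j) - ∑ t ∈ range Δ, ⨅ j : Fin d, ℓ t j ≤
      2 * Δ * ∑ t ∈ range (Δ - 1), ‖ℓ (t + 1) - ℓ t‖ :=
  stmt_4_general d Δ hd ℓ
end

section
/- Let (X_j)_{j∈ℕ} be i.i.d. bounded real random variables with essential supremum M := esssup X₁. Let h: ℝ → [0, ∞) be continuous and nondecreasing, and let f: ℝ × ℕ → (0, ∞) be such that f(·, k) is nondecreasing for every k ∈ ℕ and lim_{k→∞} f(r₁, k)/f(r₂, k) = +∞ whenever r₁ > r₂. Then E[ (Σ_{j=1}^N h(X_j) f(X_j, k)) / (Σ_{j=1}^N f(X_j, k)) ] converges to h(M) as N and k tend to infinity jointly; that is, for every η > 0 there exist N₀ and k₀ such that this expectation lies within η of h(M) for all N ≥ N₀ and k ≥ k₀. -/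
/-!
Almost surely every `X j` is at most `M`, so the weighted mean of the `h (X j)` is at most
`h M`. Conversely, fix `a < b < M` with `h a` close to `h M`. Since `P(X₀ > b) > 0`, the strong
law of large numbers makes a fixed fraction `q` of the first `N` samples exceed `b`, with
probability close to `1` for all large `N`; then the total weight is at least `q N f(b, k)`,
while the samples below `a` carry weight at most `N f(a, k)`, a vanishing fraction of it as
`k → ∞` because `f(b, k) / f(a, k) → ∞`. So the weighted mean is nearly at least `h a`.
-/

open MeasureTheory ProbabilityTheory Finset Filter Topology

noncomputable def weightedMean {ι : Type*} (s : Finset ι) (w x : ι → ℝ) : ℝ :=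
  (∑ j ∈ s, x j * w j) / ∑ j ∈ s, w j

section WeightedMean

variable {ι : Type*} {s : Finset ι} {w x : ι → ℝ}

lemma weightedMean_nonneg (hw : ∀ j ∈ s, 0 ≤ w j) (hx : ∀ j ∈ s, 0 ≤ x j) :
    0 ≤ weightedMean s w x :=
  div_nonneg (sum_nonneg fun j hj => mul_nonneg (hx j hj) (hw j hj)) (sum_nonneg hw)

lemma weightedMean_le {B : ℝ} (hw : ∀ j ∈ s, 0 ≤ w j) (hB : 0 ≤ B) (hx : ∀ j ∈ s, x j ≤ B) :
    weightedMean s w x ≤ B :=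
  div_le_of_le_mul₀ (sum_nonneg hw) hB <| by
    rw [mul_sum]
    exact sum_le_sum fun j hj => mul_le_mul_of_nonneg_right (hx j hj) (hw j hj)

end WeightedMean

section Monotone

variable {ι α : Type*} [LinearOrder α] {h g : α → ℝ}

lemma mul_sub_le_mul_of_monotone (hh : Monotone h) (hh0 : ∀ r, 0 ≤ h r) (hg : Monotone g)
    (hg0 : ∀ r, 0 ≤ g r) (a r : α) : h a * (g r - g a) ≤ h r * g r := by
  rcases le_or_gt a r with har | hra
  · calc h a * (g r - g a) ≤ h a * g r := by nlinarith [hh0 a, hg0 a]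
      _ ≤ h r * g r := mul_le_mul_of_nonneg_right (hh har) (hg0 r)
  · nlinarith [hh0 a, hh0 r, hg0 r, hg hra.le]

lemma indicator_mul_le_of_monotone (hg : Monotone g) (hg0 : ∀ r, 0 ≤ g r) (b r : α) :
    (Set.Ioi b).indicator 1 r * g b ≤ g r := by
  by_cases hbr : b < r
  · simpa [Set.indicator_of_mem (Set.mem_Ioi.2 hbr)] using hg hbr.le
  · simpa [Set.indicator_of_notMem (Set.notMem_Ioi.2 (not_lt.1 hbr))] using hg0 r

/-- The points below `a` carry total weight at most `#s * g a`, while the total weight is at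
least `q * #s * g b`. -/
lemma le_weightedMean_of_frequency (hh : Monotone h) (hh0 : ∀ r, 0 ≤ h r) (hg : Monotone g)
    (hg0 : ∀ r, 0 < g r) {s : Finset ι} {x : ι → α} (hs : s.Nonempty) {a b : α} {q : ℝ} (hq : 0 < q)
    (hfreq : q * #s ≤ ∑ j ∈ s, (Set.Ioi b).indicator 1 (x j)) :
    h a * (1 - g a / (q * g b)) ≤ weightedMean s (fun j => g (x j)) (fun j => h (x j)) := by
  set den := ∑ j ∈ s, g (x j)
  have hcard : (0 : ℝ) < #s := by exact_mod_cast hs.card_pos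
  have hm : 0 < q * #s * g b := by have := hg0 b; positivity
  have hden : q * #s * g b ≤ den :=
    calc q * #s * g b ≤ (∑ j ∈ s, (Set.Ioi b).indicator 1 (x j)) * g b := by
          gcongr; exact (hg0 b).le
      _ ≤ den := by
          rw [sum_mul]
          exact sum_le_sum fun j _ => indicator_mul_le_of_monotone hg (fun r => (hg0 r).le) b _
  have hnum : h a * (den - #s * g a) ≤ ∑ j ∈ s, h (x j) * g (x j) :=
    calc h a * (den - #s * g a) = ∑ j ∈ s, h a * (g (x j) - g a) := by
          rw [← mul_sum, sum_sub_distrib, sum_const, nsmul_eq_mul]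
      _ ≤ _ := sum_le_sum fun j _ =>
          mul_sub_le_mul_of_monotone hh hh0 hg (fun r => (hg0 r).le) a (x j)
  have hden0 : 0 < den := hm.trans_le hden
  have hga := (hg0 a).le
  have hha := hh0 a
  calc h a * (1 - g a / (q * g b)) = h a * (1 - #s * g a / (q * #s * g b)) := by
        field_simp
    _ ≤ h a * (1 - #s * g a / den) := by gcongr
    _ = h a * (den - #s * g a) / den := by field_simp
    _ ≤ weightedMean s (fun j => g (x j)) (fun j => h (x j)) := by
        unfold weightedMean; gcongr

end Monotone

/-- The paper's surrogate loss `L(θ, k, N)`, the sampled regrets being modelled by `X`. -/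
noncomputable def regretLoss {Ω : Type*} [MeasurableSpace Ω] (μ : Measure Ω) (X : ℕ → Ω → ℝ)
    (h : ℝ → ℝ) (f : ℝ → ℕ → ℝ) (N k : ℕ) : ℝ :=
  ∫ ω, weightedMean (range N) (fun j => f (X j ω) k) (fun j => h (X j ω)) ∂μ

section Probability

variable {Ω : Type*} [MeasurableSpace Ω] {μ : Measure Ω}

lemma tendsto_measure_setOf_forall_ge {A : ℕ → Set Ω} (hA : ∀ᵐ ω ∂μ, ∀ᶠ n in atTop, ω ∈ A n) :
    Tendsto (fun N => μ {ω | ∀ n ≥ N, ω ∈ A n}) atTop (𝓝 (μ Set.univ)) := by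
  have hmono : Monotone fun N => {ω | ∀ n ≥ N, ω ∈ A n} :=
    fun N N' hNN' ω hω n hn => hω n (hNN'.trans hn)
  have hunion : ⋃ N, {ω | ∀ n ≥ N, ω ∈ A n} = {ω | ∀ᶠ n in atTop, ω ∈ A n} := by
    ext ω; simp [eventually_atTop]
  have huniv : μ {ω | ∀ᶠ n in atTop, ω ∈ A n} = μ Set.univ :=
    measure_congr (ae_eq_univ.2 (ae_iff.1 hA))
  have := tendsto_measure_iUnion_atTop (μ := μ) hmono
  rwa [hunion, huniv] at this

lemma ae_eventually_mul_le_sum_indicator [IsFiniteMeasure μ] {α : Type*} [MeasurableSpace α]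
    {X : ℕ → Ω → α}
    (hmeas : ∀ j, Measurable (X j)) (hindep : Pairwise fun i j => IndepFun (X i) (X j) μ)
    (hident : ∀ j, IdentDistrib (X j) (X 0) μ μ) {E : Set α} (hE : MeasurableSet E) {q : ℝ}
    (hq : q < μ.real (X 0 ⁻¹' E)) :
    ∀ᵐ ω ∂μ, ∀ᶠ n in atTop, q * n ≤ ∑ j ∈ range n, E.indicator (1 : α → ℝ) (X j ω) := by
  have hφ : Measurable (E.indicator (1 : α → ℝ)) := measurable_const.indicator hE
  have hcomp : E.indicator (1 : α → ℝ) ∘ X 0 = (X 0 ⁻¹' E).indicator 1 := by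
    ext ω; exact (Set.indicator_comp_right (X 0)).symm
  have hint : Integrable (E.indicator (1 : α → ℝ) ∘ X 0) μ :=
    hcomp ▸ (integrable_const 1).indicator (hmeas 0 hE)
  have hmean : ∫ ω, (E.indicator (1 : α → ℝ) ∘ X 0) ω ∂μ = μ.real (X 0 ⁻¹' E) :=
    hcomp ▸ integral_indicator_one (hmeas 0 hE)
  have hslln := strong_law_ae (fun j => E.indicator (1 : α → ℝ) ∘ X j) hint
    (fun i j hij => (hindep hij).comp hφ hφ) fun j => (hident j).comp hφ
  filter_upwards [hslln] with ω hω
  rw [hmean] at hω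
  filter_upwards [hω.eventually (eventually_gt_nhds hq), eventually_gt_atTop 0] with n hn hn0
  rw [smul_eq_mul, ← div_eq_inv_mul, lt_div_iff₀ (by exact_mod_cast hn0)] at hn
  exact hn.le

end Probability

section RegretLoss

variable {Ω : Type*} [MeasurableSpace Ω] {μ : Measure Ω} [IsProbabilityMeasure μ]
  {X : ℕ → Ω → ℝ} {h : ℝ → ℝ} {f : ℝ → ℕ → ℝ}

lemma integrable_weightedMean (hmeas : ∀ j, Measurable (X j)) {B : ℝ}
    (hX : ∀ᵐ ω ∂μ, ∀ j, X j ω ≤ B) (hh_mono : Monotone h) (hh_nonneg : ∀ r, 0 ≤ h r)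
    (hf_pos : ∀ r k, 0 < f r k) (hf_mono : ∀ k, Monotone fun r => f r k) (N k : ℕ) :
    Integrable (fun ω => weightedMean (range N) (fun j => f (X j ω) k) (fun j => h (X j ω))) μ := by
  have hh := hh_mono.measurable
  have hf := (hf_mono k).measurable
  refine Integrable.of_bound (by unfold weightedMean; fun_prop : Measurable _).aestronglyMeasurable
    (h B) ?_
  filter_upwards [hX] with ω hω
  rw [Real.norm_eq_abs, abs_of_nonneg (weightedMean_nonneg (fun j _ => (hf_pos _ k).le)
    fun j _ => hh_nonneg _)]
  exact weightedMean_le (fun j _ => (hf_pos _ k).le) (hh_nonneg B) fun j _ => hh_mono (hω j)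

lemma regretLoss_le (hmeas : ∀ j, Measurable (X j)) {B : ℝ} (hX : ∀ᵐ ω ∂μ, ∀ j, X j ω ≤ B)
    (hh_mono : Monotone h) (hh_nonneg : ∀ r, 0 ≤ h r) (hf_pos : ∀ r k, 0 < f r k)
    (hf_mono : ∀ k, Monotone fun r => f r k) (N k : ℕ) :
    regretLoss μ X h f N k ≤ h B := by
  refine (integral_mono_ae (integrable_weightedMean hmeas hX hh_mono hh_nonneg hf_pos hf_mono N k)
    (integrable_const (h B)) ?_).trans_eq (by simp)
  filter_upwards [hX] with ω hω
  exact weightedMean_le (fun j _ => (hf_pos _ k).le) (hh_nonneg B) fun j _ => hh_mono (hω j)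

/-- The event that from `N₁` on a fraction `q = P(X₀ > b) / 2` of the samples exceeds `b` has
probability `> 1 - δ` for large `N₁`, and on it the weighted mean is at least `h a * (1 - δ)`
once `f a k ≤ δ * q * f b k`. -/
lemma eventually_le_regretLoss (hmeas : ∀ j, Measurable (X j))
    (hindep : Pairwise fun i j => IndepFun (X i) (X j) μ)
    (hident : ∀ j, IdentDistrib (X j) (X 0) μ μ) {B : ℝ} (hX : ∀ᵐ ω ∂μ, ∀ j, X j ω ≤ B)
    (hh_mono : Monotone h) (hh_nonneg : ∀ r, 0 ≤ h r) (hf_pos : ∀ r k, 0 < f r k)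
    (hf_mono : ∀ k, Monotone fun r => f r k)
    (hf_lim : ∀ r₁ r₂ : ℝ, r₂ < r₁ → Tendsto (fun k => f r₁ k / f r₂ k) atTop atTop)
    {a b : ℝ} (hab : a < b) (hb : 0 < μ.real (X 0 ⁻¹' Set.Ioi b)) {δ : ℝ} (hδ : 0 < δ)
    (hδ1 : δ ≤ 1) :
    ∀ᶠ Nk : ℕ × ℕ in atTop, (1 - δ) * (h a * (1 - δ)) ≤ regretLoss μ X h f Nk.1 Nk.2 := by
  set q := μ.real (X 0 ⁻¹' Set.Ioi b) / 2
  have hq : 0 < q := by positivity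
  set D : ℕ → Set Ω :=
    fun N => {ω | ∀ n ≥ N, q * n ≤ ∑ j ∈ range n, (Set.Ioi b).indicator 1 (X j ω)}
  have hD : ∀ N, MeasurableSet (D N) := fun N => by
    simp only [D, Set.ofPred_forall]
    exact .iInter fun n => .iInter fun _ => measurableSet_le measurable_const <|
      Finset.measurable_sum _ fun j _ =>
        (measurable_const.indicator measurableSet_Ioi).comp (hmeas j)
  have hDlim : Tendsto (fun N => μ.real (D N)) atTop (𝓝 1) := by
    have := tendsto_measure_setOf_forall_ge
      (A := fun n => {ω | q * n ≤ ∑ j ∈ range n, (Set.Ioi b).indicator 1 (X j ω)}) <|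
      ae_eventually_mul_le_sum_indicator hmeas hindep hident measurableSet_Ioi (half_lt_self hb)
    rw [← probReal_univ (μ := μ)]
    exact (ENNReal.tendsto_toReal (measure_ne_top μ Set.univ)).comp this
  obtain ⟨N₁, hN₁⟩ :=
    eventually_atTop.1 (hDlim.eventually (eventually_gt_nhds (show 1 - δ < 1 by linarith)))
  have hratio : Tendsto (fun k => f a k / (q * f b k)) atTop (𝓝 0) := by
    have h0 : Tendsto (fun k => q⁻¹ * (f a k / f b k)) atTop (𝓝 0) := by
      simpa using ((hf_lim b a hab).inv_tendsto_atTop).const_mul q⁻¹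
    refine h0.congr fun k => ?_
    field_simp
  obtain ⟨k₀, hk₀⟩ := eventually_atTop.1 (hratio.eventually (eventually_le_nhds hδ))
  filter_upwards [eventually_ge_atTop (max N₁ 1, k₀)] with ⟨N, k⟩ ⟨hN, hk⟩
  have hN : N₁ ≤ N ∧ 1 ≤ N := max_le_iff.1 hN
  have hlow : ∀ ω ∈ D N₁, h a * (1 - δ) ≤
      weightedMean (range N) (fun j => f (X j ω) k) (fun j => h (X j ω)) := fun ω hω =>
    calc h a * (1 - δ) ≤ h a * (1 - f a k / (q * f b k)) := by
          gcongr; exacts [hh_nonneg a, hk₀ k hk]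
      _ ≤ _ := le_weightedMean_of_frequency hh_mono hh_nonneg (hf_mono k) (hf_pos · k)
          (nonempty_range_iff.2 (by omega)) hq (by rw [card_range]; exact hω N hN.1)
  have hint := integrable_weightedMean hmeas hX hh_mono hh_nonneg hf_pos hf_mono N k
  calc (1 - δ) * (h a * (1 - δ)) ≤ μ.real (D N₁) * (h a * (1 - δ)) := by
        gcongr
        · exact mul_nonneg (hh_nonneg a) (by linarith)
        · exact (hN₁ N₁ le_rfl).le
    _ ≤ ∫ ω in D N₁, weightedMean (range N) (fun j => f (X j ω) k) (fun j => h (X j ω)) ∂μ :=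
        setIntegral_ge_of_const_le (hD N₁) (measure_ne_top μ _) hlow hint.integrableOn
    _ ≤ regretLoss μ X h f N k :=
        setIntegral_le_integral hint <| Eventually.of_forall fun ω =>
          weightedMean_nonneg (fun j _ => (hf_pos _ k).le) fun j _ => hh_nonneg _

end RegretLoss

theorem tendsto_regretLoss {Ω : Type*} [MeasurableSpace Ω] {μ : Measure Ω} [IsProbabilityMeasure μ]
    {X : ℕ → Ω → ℝ} (hmeas : ∀ j, Measurable (X j))
    (hindep : Pairwise fun i j => IndepFun (X i) (X j) μ)
    (hident : ∀ j, IdentDistrib (X j) (X 0) μ μ)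
    (hbdd : IsBoundedUnder (· ≤ ·) (ae μ) (X 0)) (hcobdd : IsCoboundedUnder (· ≤ ·) (ae μ) (X 0))
    {h : ℝ → ℝ} (hh_cont : Continuous h) (hh_mono : Monotone h) (hh_nonneg : ∀ r, 0 ≤ h r)
    {f : ℝ → ℕ → ℝ} (hf_pos : ∀ r k, 0 < f r k) (hf_mono : ∀ k, Monotone fun r => f r k)
    (hf_lim : ∀ r₁ r₂ : ℝ, r₂ < r₁ → Tendsto (fun k => f r₁ k / f r₂ k) atTop atTop) :
    Tendsto (fun Nk : ℕ × ℕ => regretLoss μ X h f Nk.1 Nk.2) atTop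
      (𝓝 (h (essSup (X 0) μ))) := by
  set M := essSup (X 0) μ
  have hX : ∀ᵐ ω ∂μ, ∀ j, X j ω ≤ M := ae_all_iff.2 fun j =>
    (hident j).symm.ae_snd measurableSet_Iic (ae_le_essSup hbdd)
  refine tendsto_order.2 ⟨fun c hc => ?_, fun c hc => Eventually.of_forall fun Nk =>
    (regretLoss_le hmeas hX hh_mono hh_nonneg hf_pos hf_mono Nk.1 Nk.2).trans_lt hc⟩
  obtain ⟨a, haM, hca⟩ := ((hh_cont.tendsto M).eventually (lt_mem_nhds hc)).exists_lt
  have hshrink : Tendsto (fun δ : ℝ => (1 - δ) * (h a * (1 - δ))) (𝓝 0) (𝓝 (h a)) := by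
    simpa using ((by fun_prop : Continuous fun δ : ℝ => (1 - δ) * (h a * (1 - δ))).tendsto 0)
  obtain ⟨δ, hδ0, hcδ, hδ1⟩ :=
    ((hshrink.eventually (lt_mem_nhds hca)).and (eventually_le_nhds one_pos)).exists_gt
  have hb : (a + M) / 2 < M := by linarith
  have hp : 0 < μ.real (X 0 ⁻¹' Set.Ioi ((a + M) / 2)) :=
    ENNReal.toReal_pos (frequently_ae_iff.1 (frequently_lt_of_lt_limsup hcobdd hb))
      (measure_ne_top μ _)
  filter_upwards [eventually_le_regretLoss hmeas hindep hident hX hh_mono hh_nonneg hf_pos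
    hf_mono hf_lim (show a < (a + M) / 2 by linarith) hp hδ0 hδ1] with Nk hNk
  exact hcδ.trans_le hNk

theorem stmt_6_general {Ω : Type*} [MeasurableSpace Ω] (μ : Measure Ω) [IsProbabilityMeasure μ]
    (X : ℕ → Ω → ℝ) (hmeas : ∀ j, Measurable (X j))
    (hindep : iIndepFun X μ)
    (hident : ∀ j, Measure.map (X j) μ = Measure.map (X 0) μ)
    (C : ℝ) (hbdd : ∀ j ω, |X j ω| ≤ C)
    (h : ℝ → ℝ) (hh_cont : Continuous h) (hh_mono : Monotone h) (hh_nonneg : ∀ r, 0 ≤ h r)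
    (f : ℝ → ℕ → ℝ) (hf_pos : ∀ r k, 0 < f r k)
    (hf_mono : ∀ k, Monotone fun r => f r k)
    (hf_lim : ∀ r₁ r₂ : ℝ, r₂ < r₁ →
      Filter.Tendsto (fun k => f r₁ k / f r₂ k) Filter.atTop Filter.atTop) :
    ∀ η > 0, ∃ N₀ k₀ : ℕ, ∀ N ≥ N₀, ∀ k ≥ k₀,
      |(∫ ω, (∑ j ∈ range N, h (X j ω) * f (X j ω) k) /
          (∑ j ∈ range N, f (X j ω) k) ∂μ) - h (essSup (X 0) μ)| ≤ η := by
  have hbounds : ∀ ω, -C ≤ X 0 ω ∧ X 0 ω ≤ C := fun ω => abs_le.1 (hbdd 0 ω)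
  have hL := tendsto_regretLoss hmeas (fun i j hij => hindep.indepFun hij)
    (fun j => ⟨(hmeas j).aemeasurable, (hmeas 0).aemeasurable, hident j⟩)
    (isBoundedUnder_of_eventually_le (.of_forall fun ω => (hbounds ω).2))
    (isBoundedUnder_of_eventually_ge (.of_forall fun ω => (hbounds ω).1)).isCoboundedUnder_flip
    hh_cont hh_mono hh_nonneg hf_pos hf_mono hf_lim
  intro η hη
  obtain ⟨⟨N₀, k₀⟩, hNk⟩ := eventually_atTop.1 (hL.eventually (Metric.closedBall_mem_nhds _ hη))
  exact ⟨N₀, k₀, fun N hN k hk => hNk (N, k) ⟨hN, hk⟩⟩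

/-- The surrogate regret-loss converges, jointly in `N, k → ∞`, to `h` of the essential
supremum: for i.i.d. bounded `X_j`, the expectation of the `f(·,k)`-weighted average of
`h(X_j)` over `N` samples converges to `h(esssup X₁)`. -/
theorem stmt_6 {Ω : Type*} [MeasurableSpace Ω] (μ : Measure Ω) [IsProbabilityMeasure μ]
    (X : ℕ → Ω → ℝ) (hmeas : ∀ j, Measurable (X j))
    (hindep : iIndepFun X μ)
    (hident : ∀ j, Measure.map (X j) μ = Measure.map (X 0) μ)
    (C : ℝ) (hbdd : ∀ j ω, |X j ω| ≤ C)
    (h : ℝ → ℝ) (hh_cont : Continuous h) (hh_mono : Monotone h) (hh_nonneg : ∀ r, 0 ≤ h r)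
    (f : ℝ → ℕ → ℝ) (hf_pos : ∀ r k, 0 < f r k)
    (hf_cont : ∀ k, Continuous fun r => f r k)
    (hf_mono : ∀ k, Monotone fun r => f r k)
    (hf_lim : ∀ r₁ r₂ : ℝ, r₂ < r₁ →
      Filter.Tendsto (fun k => f r₁ k / f r₂ k) Filter.atTop Filter.atTop) :
    ∀ η > 0, ∃ N₀ k₀ : ℕ, ∀ N ≥ N₀, ∀ k ≥ k₀,
      |(∫ ω, (∑ j ∈ range N, h (X j ω) * f (X j ω) k) /
          (∑ j ∈ range N, f (X j ω) k) ∂μ) - h (essSup (X 0) μ)| ≤ η :=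
  stmt_6_general μ X hmeas hindep hident C hbdd h hh_cont hh_mono hh_nonneg f hf_pos hf_mono hf_lim
end

section
/- Let (X_i)_{i∈ℕ} be i.i.d. real random variables, let H: ℝ → [0, ∞) be continuous and nondecreasing with esssup H(X₁) = 1, and let f: ℝ × ℕ → (0, ∞) be such that f(·, k) is nondecreasing for every k and lim_{k→∞} f(r₁, k)/f(r₂, k) = +∞ whenever r₁ > r₂. Then for every 0 < ε < 1, almost surely, as N and k tend to infinity jointly, both ratios (Σ_{i=1}^N f(X_i, k) H(X_i) 1{H(X_i) < 1−ε}) / (Σ_{i=1}^N f(X_i, k) H(X_i) 1{H(X_i) > 1−ε/2}) and (Σ_{i=1}^N f(X_i, k) 1{H(X_i) < 1−ε}) / (Σ_{i=1}^N f(X_i, k) 1{H(X_i) > 1−ε/2}) converge to 0 (the denominators are almost surely positive for all large N). -/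
open MeasureTheory ProbabilityTheory Finset Filter Topology

/-! Choose `a < b` with `1 - ε/2 < H a` and `p = P(X₀ > b) > 0`; they exist because
`essSup H(X₀) = 1` and `H` is continuous. Every sample with `H < 1 - ε` lies below `a` and every
sample above `b` has `H > 1 - ε/2`, so for a nonnegative weight `φ(·, k)` that is nondecreasing in
the sample, the ratio is at most `N φ(a, k) / (#{i < N | X_i > b} φ(b, k))`. By the strong law
`#{i < N | X_i > b} / N → p`, while `φ(a, k) / φ(b, k) → 0` for both weights `f` and `f H`. -/

noncomputable def empiricalCount {α : Type*} (x : ℕ → α) (S : Set α) (N : ℕ) : ℝ :=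
  ∑ i ∈ range N, S.indicator 1 (x i)

section Probabilistic

variable {Ω : Type*} [MeasurableSpace Ω] {μ : Measure Ω}

theorem measure_lt_ne_zero_of_lt_essSup {β : Type*} [ConditionallyCompleteLinearOrder β]
    [NeZero μ] {g : Ω → β} {m c : β} (hg : ∀ ω, m ≤ g ω) (hc : c < essSup g μ) :
    μ {ω | c < g ω} ≠ 0 := by
  intro h
  have hle : g ≤ᵐ[μ] fun _ => c := ae_iff.2 (by simpa only [not_le] using h)
  exact hc.not_ge (essSup_le_of_ae_le c hle (isCoboundedUnder_le_of_le _ hg))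

theorem IsOpen.exists_mem_lt_measure_preimage_Ioi_ne_zero {Y : Ω → ℝ} {U : Set ℝ}
    (hU : IsOpen U) (h : μ (Y ⁻¹' U) ≠ 0) : ∃ a ∈ U, ∃ b, a < b ∧ μ (Y ⁻¹' Set.Ioi b) ≠ 0 := by
  by_contra! hnull
  refine h (measure_mono_null ?_ (measure_iUnion_null
    fun q : {q : ℚ × ℚ // (q.1 : ℝ) ∈ U ∧ q.1 < q.2} => hnull q.1.1 q.2.1 q.1.2 (mod_cast q.2.2)))
  intro ω hω
  obtain ⟨l, hl, hlU⟩ := exists_Ioc_subset_of_mem_nhds (hU.mem_nhds hω) ⟨Y ω - 1, by linarith⟩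
  obtain ⟨q, hlq, hq⟩ := exists_rat_btwn hl
  obtain ⟨q', hqq', hq'⟩ := exists_rat_btwn hq
  exact Set.mem_iUnion.2 ⟨⟨(q, q'), hlU ⟨hlq, (hqq'.trans hq').le⟩, mod_cast hqq'⟩, hq'⟩

theorem ae_tendsto_empiricalCount_div [IsFiniteMeasure μ] {α : Type*} [MeasurableSpace α]
    (X : ℕ → Ω → α) (hindep : Pairwise fun i j => IndepFun (X i) (X j) μ)
    (hident : ∀ i, IdentDistrib (X i) (X 0) μ μ) {S : Set α} (hS : MeasurableSet S) :
    ∀ᵐ ω ∂μ, Tendsto (fun N : ℕ => empiricalCount (X · ω) S N / N) atTop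
      (𝓝 (μ.real (X 0 ⁻¹' S))) := by
  have hmeas : Measurable (S.indicator (1 : α → ℝ)) := measurable_const.indicator hS
  have hX : AEMeasurable (X 0) μ := (hident 0).aemeasurable_fst
  have hint : Integrable (S.indicator (1 : α → ℝ) ∘ X 0) μ :=
    ((integrable_indicator_iff hS).2 (integrable_const 1).integrableOn).comp_aemeasurable hX
  have hmean : μ[S.indicator (1 : α → ℝ) ∘ X 0] = μ.real (X 0 ⁻¹' S) := by
    rw [Function.comp_def, ← integral_map hX hmeas.aestronglyMeasurable,
      integral_indicator_one hS, measureReal_def, Measure.map_apply_of_aemeasurable hX hS,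
      measureReal_def]
  rw [← hmean]
  exact strong_law_ae_real (fun i => S.indicator 1 ∘ X i) hint
    (fun i j hij => (hindep hij).comp hmeas hmeas) fun i => (hident i).comp hmeas

end Probabilistic

section SamplePath

variable {x : ℕ → ℝ} {P Q : ℝ → Prop} [DecidablePred P] [DecidablePred Q] {a b p : ℝ}

theorem sum_ite_le_natCast_mul {φ : ℝ → ℝ} (hφ : Monotone φ) (ha : 0 ≤ φ a) (hP : ∀ r, P r → r < a)
    (N : ℕ) : ∑ i ∈ range N, (if P (x i) then φ (x i) else 0) ≤ N * φ a :=
  calc _ ≤ ∑ _i ∈ range N, φ a := sum_le_sum fun i _ => by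
          split_ifs with h
          exacts [hφ (hP _ h).le, ha]
    _ = N * φ a := by rw [sum_const, card_range, nsmul_eq_mul]

theorem empiricalCount_mul_le_sum_ite {φ : ℝ → ℝ} (hφ : Monotone φ) (hφ0 : ∀ r, 0 ≤ φ r)
    (hQ : ∀ r, b < r → Q r) (N : ℕ) :
    empiricalCount x (Set.Ioi b) N * φ b ≤ ∑ i ∈ range N, (if Q (x i) then φ (x i) else 0) := by
  rw [empiricalCount, sum_mul]
  refine sum_le_sum fun i _ => ?_
  by_cases hi : b < x i
  · simpa [Set.indicator_of_mem (Set.mem_Ioi.2 hi), hQ _ hi] using hφ hi.le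
  · rw [Set.indicator_of_notMem (s := Set.Ioi b) hi, zero_mul]
    split_ifs
    exacts [hφ0 _, le_rfl]

theorem eventually_empiricalCount_pos (hp : 0 < p)
    (hfreq : Tendsto (fun N : ℕ => empiricalCount x (Set.Ioi b) N / N) atTop (𝓝 p)) :
    ∀ᶠ N in atTop, 0 < empiricalCount x (Set.Ioi b) N := by
  filter_upwards [hfreq.eventually (lt_mem_nhds hp), eventually_gt_atTop 0] with N h hN
  exact (div_pos_iff_of_pos_right (by positivity)).1 h

theorem eventually_forall_sum_ite_pos {φ : ℝ → ℕ → ℝ} (hφ : ∀ k, Monotone (φ · k))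
    (hφ0 : ∀ r k, 0 ≤ φ r k) (hφb : ∀ k, 0 < φ b k) (hQ : ∀ r, b < r → Q r) (hp : 0 < p)
    (hfreq : Tendsto (fun N : ℕ => empiricalCount x (Set.Ioi b) N / N) atTop (𝓝 p)) :
    ∀ᶠ N in atTop, ∀ k, 0 < ∑ i ∈ range N, (if Q (x i) then φ (x i) k else 0) := by
  filter_upwards [eventually_empiricalCount_pos hp hfreq] with N hN k
  exact (mul_pos hN (hφb k)).trans_le (empiricalCount_mul_le_sum_ite (hφ k) (hφ0 · k) hQ N)

theorem tendsto_sum_ite_div_sum_ite {φ : ℝ → ℕ → ℝ} (hφ : ∀ k, Monotone (φ · k))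
    (hφ0 : ∀ r k, 0 ≤ φ r k) (hφb : ∀ k, 0 < φ b k) (hP : ∀ r, P r → r < a)
    (hQ : ∀ r, b < r → Q r) (hp : 0 < p)
    (hfreq : Tendsto (fun N : ℕ => empiricalCount x (Set.Ioi b) N / N) atTop (𝓝 p))
    (hlim : Tendsto (fun k => φ a k / φ b k) atTop (𝓝 0)) :
    Tendsto (fun Nk : ℕ × ℕ => (∑ i ∈ range Nk.1, if P (x i) then φ (x i) Nk.2 else 0) /
      ∑ i ∈ range Nk.1, if Q (x i) then φ (x i) Nk.2 else 0) (atTop ×ˢ atTop) (𝓝 0) := by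
  have hbound : Tendsto (fun Nk : ℕ × ℕ => (empiricalCount x (Set.Ioi b) Nk.1 / Nk.1)⁻¹ *
      (φ a Nk.2 / φ b Nk.2)) (atTop ×ˢ atTop) (𝓝 (p⁻¹ * 0)) :=
    ((hfreq.inv₀ hp.ne').comp tendsto_fst).mul (hlim.comp tendsto_snd)
  rw [mul_zero] at hbound
  have hcount : ∀ᶠ Nk : ℕ × ℕ in atTop ×ˢ atTop, 0 < empiricalCount x (Set.Ioi b) Nk.1 :=
    tendsto_fst.eventually (eventually_empiricalCount_pos hp hfreq)
  refine tendsto_of_tendsto_of_tendsto_of_le_of_le' tendsto_const_nhds hbound ?_ ?_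
  · refine Eventually.of_forall fun Nk => div_nonneg ?_ ?_ <;>
      exact sum_nonneg fun i _ => by split_ifs <;> simp [hφ0]
  · filter_upwards [hcount] with ⟨N, k⟩ hN
    calc _ ≤ N * φ a k / (empiricalCount x (Set.Ioi b) N * φ b k) :=
          div_le_div₀ (mul_nonneg N.cast_nonneg (hφ0 a k))
            (sum_ite_le_natCast_mul (hφ k) (hφ0 a k) hP N)
            (mul_pos hN (hφb k)) (empiricalCount_mul_le_sum_ite (hφ k) (hφ0 · k) hQ N)
      _ = _ := by rw [inv_div, mul_div_mul_comm]

end SamplePath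

/-- Almost surely, in the joint limit `N, k → ∞`, the `f(·,k)`-weight carried by samples
with `H`-value below `1 − ε` is negligible compared with that carried by samples with
`H`-value above `1 − ε/2` (both with and without the extra `H` factor); the denominators
are almost surely positive for all large `N`. -/
theorem stmt_7 {Ω : Type*} [MeasurableSpace Ω] (μ : Measure Ω) [IsProbabilityMeasure μ]
    (X : ℕ → Ω → ℝ) (hmeas : ∀ i, Measurable (X i))
    (hindep : iIndepFun X μ)
    (hident : ∀ i, Measure.map (X i) μ = Measure.map (X 0) μ)
    (H : ℝ → ℝ) (hH_cont : Continuous H) (hH_mono : Monotone H) (hH_nonneg : ∀ r, 0 ≤ H r)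
    (hH_ess : essSup (fun ω => H (X 0 ω)) μ = 1)
    (f : ℝ → ℕ → ℝ) (hf_pos : ∀ r k, 0 < f r k)
    (hf_mono : ∀ k, Monotone fun r => f r k)
    (hf_lim : ∀ r₁ r₂ : ℝ, r₂ < r₁ →
      Filter.Tendsto (fun k => f r₁ k / f r₂ k) Filter.atTop Filter.atTop)
    (ε : ℝ) (hε0 : 0 < ε) (hε1 : ε < 1) :
    ∀ᵐ ω ∂μ,
      (∃ N₁ : ℕ, ∀ N ≥ N₁, ∀ k : ℕ,
        (0 < ∑ i ∈ range N,
            (if 1 - ε / 2 < H (X i ω) then f (X i ω) k * H (X i ω) else 0)) ∧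
        (0 < ∑ i ∈ range N, (if 1 - ε / 2 < H (X i ω) then f (X i ω) k else 0))) ∧
      (∀ η > 0, ∃ N₀ k₀ : ℕ, ∀ N ≥ N₀, ∀ k ≥ k₀,
        |(∑ i ∈ range N, if H (X i ω) < 1 - ε then f (X i ω) k * H (X i ω) else 0) /
            (∑ i ∈ range N,
              if 1 - ε / 2 < H (X i ω) then f (X i ω) k * H (X i ω) else 0)| ≤ η ∧
        |(∑ i ∈ range N, if H (X i ω) < 1 - ε then f (X i ω) k else 0) /
            (∑ i ∈ range N,
              if 1 - ε / 2 < H (X i ω) then f (X i ω) k else 0)| ≤ η) := by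
  obtain ⟨a, hca : 1 - ε / 2 < H a, b, hab, hb⟩ :=
    (isOpen_Ioi.preimage hH_cont).exists_mem_lt_measure_preimage_Ioi_ne_zero
      (measure_lt_ne_zero_of_lt_essSup (c := 1 - ε / 2) (fun ω => hH_nonneg (X 0 ω))
        (by rw [hH_ess]; linarith))
  have hP : ∀ r, H r < 1 - ε → r < a := fun r hr =>
    not_le.1 fun h => by linarith [hH_mono h]
  have hQ : ∀ r, b < r → 1 - ε / 2 < H r := fun r hr => hca.trans_le (hH_mono (hab.trans hr).le)
  have hHb : 0 < H b := by linarith [hH_mono hab.le]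
  have hp : 0 < μ.real (X 0 ⁻¹' Set.Ioi b) := ENNReal.toReal_pos hb (measure_ne_top μ _)
  have hlim : Tendsto (fun k => f a k / f b k) atTop (𝓝 0) :=
    (hf_lim b a hab).inv_tendsto_atTop.congr fun k => inv_div _ _
  have hlimH : Tendsto (fun k => f a k * H a / (f b k * H b)) atTop (𝓝 0) := by
    simpa only [mul_div_mul_comm, zero_mul] using hlim.mul_const (H a / H b)
  have hfH_mono : ∀ k, Monotone fun r => f r k * H r :=
    fun k => (hf_mono k).mul hH_mono (fun r => (hf_pos r k).le) hH_nonneg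
  filter_upwards [ae_tendsto_empiricalCount_div X (fun i j hij => hindep.indepFun hij)
    (fun i => ⟨(hmeas i).aemeasurable, (hmeas 0).aemeasurable, hident i⟩)
    (measurableSet_Ioi (a := b))] with ω hfreq
  have hpos₁ := eventually_forall_sum_ite_pos (x := (X · ω)) (φ := fun r k => f r k * H r)
    hfH_mono (fun r k => mul_nonneg (hf_pos r k).le (hH_nonneg r))
    (fun k => mul_pos (hf_pos b k) hHb) hQ hp hfreq
  have hpos₂ := eventually_forall_sum_ite_pos (x := (X · ω)) hf_mono (fun r k => (hf_pos r k).le)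
    (hf_pos b) hQ hp hfreq
  have hlim₁ := tendsto_sum_ite_div_sum_ite (x := (X · ω)) hfH_mono
    (fun r k => mul_nonneg (hf_pos r k).le (hH_nonneg r)) (fun k => mul_pos (hf_pos b k) hHb)
    hP hQ hp hfreq hlimH
  have hlim₂ := tendsto_sum_ite_div_sum_ite (x := (X · ω)) hf_mono (fun r k => (hf_pos r k).le)
    (hf_pos b) hP hQ hp hfreq hlim
  refine ⟨?_, fun η hη => ?_⟩
  · obtain ⟨N₁, hN₁⟩ := eventually_atTop.1 (hpos₁.and hpos₂)
    exact ⟨N₁, fun N hN k => ⟨(hN₁ N hN).1 k, (hN₁ N hN).2 k⟩⟩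
  · have small : ∀ {g : ℕ × ℕ → ℝ}, Tendsto g (atTop ×ˢ atTop) (𝓝 0) →
        ∀ᶠ Nk in atTop, |g Nk| ≤ η := fun hg => by
      rw [← prod_atTop_atTop_eq]
      exact hg.abs.eventually (eventually_le_nhds (by rwa [abs_zero]))
    obtain ⟨n, hn⟩ := eventually_atTop_prod_self'.1 ((small hlim₁).and (small hlim₂))
    exact ⟨n, n, hn⟩
end

section
/- Let N ∈ ℕ+, let h: ℝ → ℝ be nondecreasing, and let f: ℝ × ℕ+ → (0, ∞) be log-supermodular in the sense that f(R₁, k₁)·f(R₂, k₂) ≥ f(R₂, k₁)·f(R₁, k₂) whenever R₁ ≥ R₂ and k₁ ≥ k₂. Then for all k₁ ≤ k₂ in ℕ+ and all real numbers X_1, …, X_N, (Σ_{i=1}^N f(X_i, k₁) h(X_i)) / (Σ_{i=1}^N f(X_i, k₁)) ≤ (Σ_{i=1}^N f(X_i, k₂) h(X_i)) / (Σ_{i=1}^N f(X_i, k₂)). -/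
/-!
Weighting by `f(·, k₂)` instead of `f(·, k₁)` multiplies each weight by the ratio
`f(·, k₂) / f(·, k₁)`, which is nondecreasing by log-supermodularity; tilting the weights
towards larger points cannot decrease the average of the nondecreasing `h`. Quantitatively,
cross-multiplying the two averages leaves the double sum
`∑ᵢ ∑ⱼ (h xᵢ - h xⱼ) (f(xᵢ, k₂) f(xⱼ, k₁) - f(xᵢ, k₁) f(xⱼ, k₂))`, whose terms are all nonnegative.
-/

open Finset

lemma mul_sub_mul_nonneg_of_monotone {α : Type*} [LinearOrder α] {g φ ψ : α → ℝ}
    (hg : Monotone g) (hratio : ∀ x y, y ≤ x → φ x * ψ y ≤ ψ x * φ y) (x y : α) :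
    0 ≤ (g x - g y) * (ψ x * φ y - φ x * ψ y) := by
  rcases le_total y x with hyx | hxy
  · exact mul_nonneg (sub_nonneg.mpr (hg hyx)) (sub_nonneg.mpr (hratio x y hyx))
  · refine mul_nonneg_of_nonpos_of_nonpos (sub_nonpos.mpr (hg hxy)) (sub_nonpos.mpr ?_)
    linarith [hratio y x hxy]

section WeightedAverage

variable {ι : Type*} (s : Finset ι)

lemma two_mul_sum_mul_sum_sub_sum_mul_sum (a v w : ι → ℝ) :
    2 * ((∑ i ∈ s, v i * a i) * ∑ i ∈ s, w i - (∑ i ∈ s, w i * a i) * ∑ i ∈ s, v i) =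
      ∑ i ∈ s, ∑ j ∈ s, (a i - a j) * (v i * w j - w i * v j) := by
  set D := ∑ i ∈ s, ∑ j ∈ s, a i * (v i * w j - w i * v j)
  have hcross : (∑ i ∈ s, v i * a i) * ∑ i ∈ s, w i - (∑ i ∈ s, w i * a i) * ∑ i ∈ s, v i = D := by
    rw [sum_mul_sum, sum_mul_sum, ← sum_sub_distrib]
    refine sum_congr rfl fun i _ => ?_
    rw [← sum_sub_distrib]
    exact sum_congr rfl fun j _ => by ring
  have hswap : ∑ i ∈ s, ∑ j ∈ s, a j * (v i * w j - w i * v j) = -D := by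
    rw [sum_comm, ← sum_neg_distrib]
    refine sum_congr rfl fun i _ => ?_
    rw [← sum_neg_distrib]
    exact sum_congr rfl fun j _ => by ring
  simp only [sub_mul, sum_sub_distrib, hswap, hcross]
  ring

theorem div_sum_le_div_sum_of_pairwise {a v w : ι → ℝ} (hw : ∀ i ∈ s, 0 < w i)
    (hv : ∀ i ∈ s, 0 < v i) (hpair : ∀ i ∈ s, ∀ j ∈ s, 0 ≤ (a i - a j) * (v i * w j - w i * v j)) :
    (∑ i ∈ s, w i * a i) / ∑ i ∈ s, w i ≤ (∑ i ∈ s, v i * a i) / ∑ i ∈ s, v i := by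
  rcases s.eq_empty_or_nonempty with rfl | hs
  · simp
  rw [div_le_div_iff₀ (sum_pos hw hs) (sum_pos hv hs)]
  have hdouble : 0 ≤ ∑ i ∈ s, ∑ j ∈ s, (a i - a j) * (v i * w j - w i * v j) :=
    sum_nonneg fun i hi => sum_nonneg fun j hj => hpair i hi j hj
  linarith [two_mul_sum_mul_sum_sub_sum_mul_sum s a v w]

end WeightedAverage

theorem stmt_8_general (N : ℕ)
    (h : ℝ → ℝ) (hh : Monotone h)
    (f : ℝ → ℕ → ℝ) (hf_pos : ∀ r k, 0 < f r k)
    (hf_lsm : ∀ R₁ R₂ : ℝ, ∀ k₁ k₂ : ℕ, R₂ ≤ R₁ → k₂ ≤ k₁ →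
      f R₂ k₁ * f R₁ k₂ ≤ f R₁ k₁ * f R₂ k₂)
    (k₁ k₂ : ℕ) (hk : k₁ ≤ k₂) (X : ℕ → ℝ) :
    (∑ i ∈ range N, f (X i) k₁ * h (X i)) / (∑ i ∈ range N, f (X i) k₁) ≤
      (∑ i ∈ range N, f (X i) k₂ * h (X i)) / (∑ i ∈ range N, f (X i) k₂) :=
  div_sum_le_div_sum_of_pairwise (range N) (fun _ _ => hf_pos _ _) (fun _ _ => hf_pos _ _)
    fun i _ j _ => mul_sub_mul_nonneg_of_monotone (φ := (f · k₁)) (ψ := (f · k₂)) hh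
      (fun x y hyx => (mul_comm _ _).trans_le (hf_lsm x y k₂ k₁ hyx hk)) (X i) (X j)

/-- If `log f` is supermodular, the `f(·,k)`-weighted average of the nondecreasing
function `h` over any fixed finite sample is nondecreasing in `k`. -/
theorem stmt_8 (N : ℕ) (hN : 0 < N)
    (h : ℝ → ℝ) (hh : Monotone h)
    (f : ℝ → ℕ → ℝ) (hf_pos : ∀ r k, 0 < f r k)
    (hf_lsm : ∀ R₁ R₂ : ℝ, ∀ k₁ k₂ : ℕ, R₂ ≤ R₁ → k₂ ≤ k₁ →
      f R₂ k₁ * f R₁ k₂ ≤ f R₁ k₁ * f R₂ k₂)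
    (k₁ k₂ : ℕ) (hk₁ : 0 < k₁) (hk : k₁ ≤ k₂) (X : ℕ → ℝ) :
    (∑ i ∈ range N, f (X i) k₁ * h (X i)) / (∑ i ∈ range N, f (X i) k₁) ≤
      (∑ i ∈ range N, f (X i) k₂ * h (X i)) / (∑ i ∈ range N, f (X i) k₂) :=
  stmt_8_general N h hh f hf_pos hf_lsm k₁ k₂ hk X
end

section
/- Let T ≥ 2 and let ℓ_1, …, ℓ_T be i.i.d. bounded ℝ^d-valued random vectors, symmetric about the origin (ℓ₁ and −ℓ₁ have the same distribution), with covariance Σ := E[ℓ₁ℓ₁ᵀ]. Then for all A, C ∈ ℝ^{d×d}, all β, δ ∈ ℝ^d and all R ≥ 0, E[ ( Σ_{t=1}^T (t−1) ℓ_t ) · ( Σ_{t=1}^T Σ_{i=1}^{t−1} ℓ_tᵀ (A ℓ_i ℓ_iᵀ β + C ℓ_i + δ) + R ‖Σ_{t=1}^T ℓ_t‖₂ ) ] = (T(T−1)(2T−1)/6) · ( Σ A Σ β + Σ δ ), where the left-hand side is the expectation of the ℝ^d-valued random vector obtained by multiplying the vector Σ_t (t−1)ℓ_t by the scalar in parentheses.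 -/
open MeasureTheory ProbabilityTheory Finset Matrix

/-!
Expanding the product, the expectation splits into the terms `s · E[ℓ_{s,a} · ℓ_t ⬝ w(ℓ_i)]`,
`i < t`, with `w(z) = A z zᵀ β + C z + δ`, and the norm term `E[(∑_s s ℓ_{s,a}) ‖∑_t ℓ_t‖₂]`.
The norm term is an odd function of the whole sequence, whose joint law is invariant under
`ℓ ↦ -ℓ` because the `ℓ_t` are independent and symmetric; so it vanishes. If `s ≠ t`, then `ℓ_t`
is centred and independent of `(ℓ_s, ℓ_i)`, so the term vanishes; if `s = t`, it factors as
`∑_b Σ_{ab} E[w(ℓ_i)_b] = (Σ (A Σ β + δ))_a`, the `C`-term dropping out since `ℓ_i` is centred.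
What remains is `∑_{s<T} s² = T(T-1)(2T-1)/6` copies of `(Σ A Σ β + Σ δ)_a`.
-/

section

variable {Ω ι n : Type*} [MeasurableSpace Ω] {μ : Measure Ω}

theorem integral_comp_eq_zero_of_map_neg {E : Type*} [MeasurableSpace E] [Neg E]
    [MeasurableNeg E] {X : Ω → E} (hX : Measurable X) (hsymm : μ.map X = μ.map (fun ω => -X ω))
    {F : E → ℝ} (hF : Measurable F) (hodd : ∀ x, F (-x) = -F x) :
    ∫ ω, F (X ω) ∂μ = 0 := by
  have h : ∫ ω, F (X ω) ∂μ = ∫ ω, F (-X ω) ∂μ := by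
    rw [← integral_map hX.aemeasurable hF.aestronglyMeasurable, hsymm,
      integral_map (φ := fun ω => -X ω) hX.neg.aemeasurable hF.aestronglyMeasurable]
  simp only [hodd, integral_neg] at h
  linarith

theorem ProbabilityTheory.iIndepFun.map_fun_eq_map_neg {E : Type*} [MeasurableSpace E] [Neg E]
    [MeasurableNeg E] {f : ι → Ω → E} (hmeas : ∀ i, Measurable (f i)) (hindep : iIndepFun f μ)
    (hsymm : ∀ i, μ.map (f i) = μ.map (fun ω => -f i ω)) :
    μ.map (fun ω i => f i ω) = μ.map (fun ω => -fun i => f i ω) := by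
  have hneg : iIndepFun (fun i ω => -f i ω) μ :=
    hindep.comp (fun _ => Neg.neg) fun _ => measurable_neg
  calc μ.map (fun ω i => f i ω) = Measure.infinitePi fun i => μ.map (f i) :=
        hindep.map_fun_eq_infinitePi_map hmeas
    _ = Measure.infinitePi fun i => μ.map (fun ω => -f i ω) := by simp_rw [hsymm]
    _ = μ.map (fun ω => -fun i => f i ω) :=
        (hneg.map_fun_eq_infinitePi_map fun i => (hmeas i).neg).symm

theorem integrable_comp_of_mem_isCompact [IsFiniteMeasure μ] {E : Type*} [TopologicalSpace E]
    [MeasurableSpace E] [OpensMeasurableSpace E] {K : Set E} (hK : IsCompact K) {X : Ω → E}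
    (hX : Measurable X) (hXK : ∀ ω, X ω ∈ K) {G : E → ℝ} (hG : Continuous G) :
    Integrable (fun ω => G (X ω)) μ := by
  obtain ⟨C, hC⟩ := hK.exists_bound_of_continuousOn hG.continuousOn
  exact .of_bound (hG.measurable.comp hX).aestronglyMeasurable C
    (ae_of_all _ fun ω => hC _ (hXK ω))

theorem integrable_comp_of_abs_le [IsFiniteMeasure μ] [Countable ι] [Countable n]
    {ℓ : ι → Ω → n → ℝ} (hmeas : ∀ i, Measurable (ℓ i)) {Cb : ℝ}
    (hbdd : ∀ i ω a, |ℓ i ω a| ≤ Cb) {G : (ι → n → ℝ) → ℝ} (hG : Continuous G) :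
    Integrable (fun ω => G (fun i => ℓ i ω)) μ :=
  integrable_comp_of_mem_isCompact
    (isCompact_univ_pi fun _ => isCompact_univ_pi fun _ => isCompact_Icc)
    (measurable_pi_lambda _ hmeas) (fun ω i _ a _ => abs_le.mp (hbdd i ω a)) hG

noncomputable def secondMoment (X : Ω → n → ℝ) (μ : Measure Ω) : Matrix n n ℝ :=
  Matrix.of fun a b => ∫ ω, X ω a * X ω b ∂μ

/-- The vector `A z zᵀ β + C z + δ` that the attention output pairs with each later loss. -/
def lsaWeight [Fintype n] (A C : Matrix n n ℝ) (β δ : n → ℝ) (z : n → ℝ) : n → ℝ :=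
  (z ⬝ᵥ β) • (A *ᵥ z) + C *ᵥ z + δ

@[fun_prop]
theorem continuous_lsaWeight [Fintype n] (A C : Matrix n n ℝ) (β δ : n → ℝ) :
    Continuous (lsaWeight A C β δ) := by
  unfold lsaWeight
  fun_prop

theorem integral_mul_mul_comp_of_ne [DecidableEq ι] {ℓ : ι → Ω → n → ℝ}
    (hmeas : ∀ i, Measurable (ℓ i)) (hindep : iIndepFun ℓ μ)
    (hmean : ∀ i b, ∫ ω, ℓ i ω b ∂μ = 0) {i t : ι} (hit : i ≠ t) (s : ι) (a b : n)
    {g : (n → ℝ) → ℝ} (hg : Measurable g) :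
    ∫ ω, ℓ s ω a * (ℓ t ω b * g (ℓ i ω)) ∂μ =
      if s = t then secondMoment (ℓ t) μ a b * ∫ ω, g (ℓ i ω) ∂μ else 0 := by
  split_ifs with hst
  · subst hst
    have h := (hindep.indepFun hit.symm).integral_fun_comp_mul_comp (hmeas s).aemeasurable
      (hmeas i).aemeasurable (f := fun z => z a * z b)
      (by fun_prop : Measurable fun z : n → ℝ => z a * z b).aestronglyMeasurable
      hg.aestronglyMeasurable
    simpa only [secondMoment, of_apply, mul_assoc] using h
  · -- `s` may equal `i`: only `t ∉ {s, i}` is needed for `ℓ t` to split off.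
    have h := (hindep.indepFun_prodMk hmeas s i t hst hit).symm.integral_fun_comp_mul_comp
      (hmeas t).aemeasurable ((hmeas s).prodMk (hmeas i)).aemeasurable
      (f := fun z => z b) (g := fun p => p.1 a * g p.2)
      (by fun_prop : Measurable fun z : n → ℝ => z b).aestronglyMeasurable
      (by fun_prop : Measurable fun p : (n → ℝ) × (n → ℝ) => p.1 a * g p.2).aestronglyMeasurable
    rw [hmean, zero_mul] at h
    rw [← h]
    congr 1 with ω
    ring

theorem integral_lsaWeight_apply [IsProbabilityMeasure μ] [Countable ι] [Fintype n]
    {ℓ : ι → Ω → n → ℝ} (hmeas : ∀ i, Measurable (ℓ i)) {Cb : ℝ}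
    (hbdd : ∀ i ω a, |ℓ i ω a| ≤ Cb) (hmean : ∀ i b, ∫ ω, ℓ i ω b ∂μ = 0) (i : ι)
    (A C : Matrix n n ℝ) (β δ : n → ℝ) (b : n) :
    ∫ ω, lsaWeight A C β δ (ℓ i ω) b ∂μ = (A *ᵥ secondMoment (ℓ i) μ *ᵥ β + δ) b := by
  have expand : ∀ z : n → ℝ, lsaWeight A C β δ z b =
      ∑ c, ∑ e, A b c * β e * (z c * z e) + ∑ c, C b c * z c + δ b := by
    intro z
    simp only [lsaWeight, Pi.add_apply, Pi.smul_apply, smul_eq_mul, mulVec, dotProduct,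
      Finset.sum_mul, Finset.mul_sum]
    congr 2
    exact Finset.sum_congr rfl fun c _ => Finset.sum_congr rfl fun e _ => by ring
  have hsq : ∀ c e, Integrable (fun ω => ℓ i ω c * ℓ i ω e) μ := fun c e =>
    integrable_comp_of_abs_le hmeas hbdd (G := fun x => x i c * x i e) (by fun_prop)
  have hlin : ∀ c, Integrable (fun ω => ℓ i ω c) μ := fun c =>
    integrable_comp_of_abs_le hmeas hbdd (G := fun x => x i c) (by fun_prop)
  have hquad := integrable_finsetSum Finset.univ fun c _ =>
    integrable_finsetSum Finset.univ fun e _ => (hsq c e).const_mul (A b c * β e)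
  have hlinC := integrable_finsetSum Finset.univ fun c _ => (hlin c).const_mul (C b c)
  simp only [expand]
  rw [integral_add (by exact hquad.add hlinC) (integrable_const _), integral_add hquad hlinC,
    integral_finsetSum _ fun c _ => integrable_finsetSum _ fun e _ => (hsq c e).const_mul _,
    integral_finsetSum _ fun c _ => (hlin c).const_mul _]
  simp only [integral_finsetSum _ fun e _ => (hsq _ e).const_mul _, integral_const_mul, hmean,
    mul_zero, Finset.sum_const_zero, add_zero, integral_const, probReal_univ, one_smul]
  simp only [Pi.add_apply, mulVec, dotProduct, secondMoment, of_apply, Finset.mul_sum]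
  exact congrArg (· + δ b)
    (Finset.sum_congr rfl fun c _ => Finset.sum_congr rfl fun e _ => by ring)

theorem integral_mul_dotProduct_lsaWeight [IsProbabilityMeasure μ] [DecidableEq ι]
    [Countable ι] [Fintype n] {ℓ : ι → Ω → n → ℝ} (hmeas : ∀ i, Measurable (ℓ i))
    (hindep : iIndepFun ℓ μ) {Cb : ℝ} (hbdd : ∀ i ω a, |ℓ i ω a| ≤ Cb)
    (hmean : ∀ i b, ∫ ω, ℓ i ω b ∂μ = 0) {i t : ι} (hit : i ≠ t) (s : ι)
    (A C : Matrix n n ℝ) (β δ : n → ℝ) (a : n) :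
    ∫ ω, ℓ s ω a * (ℓ t ω ⬝ᵥ lsaWeight A C β δ (ℓ i ω)) ∂μ =
      if s = t then (secondMoment (ℓ t) μ *ᵥ (A *ᵥ secondMoment (ℓ i) μ *ᵥ β + δ)) a
      else 0 := by
  set w := lsaWeight A C β δ
  have hw : Continuous w := continuous_lsaWeight A C β δ
  calc ∫ ω, ℓ s ω a * (ℓ t ω ⬝ᵥ w (ℓ i ω)) ∂μ
      = ∑ b, ∫ ω, ℓ s ω a * (ℓ t ω b * w (ℓ i ω) b) ∂μ := by
        simp only [dotProduct, Finset.mul_sum]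
        exact integral_finsetSum _ fun b _ => integrable_comp_of_abs_le hmeas hbdd
          (G := fun x => x s a * (x t b * w (x i) b)) (by fun_prop)
    _ = ∑ b, if s = t then secondMoment (ℓ t) μ a b * ∫ ω, w (ℓ i ω) b ∂μ else 0 :=
        Finset.sum_congr rfl fun b _ => integral_mul_mul_comp_of_ne hmeas hindep hmean hit s a b
          (g := fun z => w z b) ((continuous_apply b).comp hw).measurable
    _ = _ := by
        split_ifs
        · simp only [w, integral_lsaWeight_apply hmeas hbdd hmean]
          rfl
        · simp

theorem integral_sum_mul_sum_dotProduct_lsaWeight [IsProbabilityMeasure μ] [Fintype n]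
    {ℓ : ℕ → Ω → n → ℝ} (hmeas : ∀ i, Measurable (ℓ i)) (hindep : iIndepFun ℓ μ) {Cb : ℝ}
    (hbdd : ∀ i ω a, |ℓ i ω a| ≤ Cb) (hmean : ∀ i b, ∫ ω, ℓ i ω b ∂μ = 0) {S : Matrix n n ℝ}
    (hmoment : ∀ i, secondMoment (ℓ i) μ = S) (T : ℕ) (A C : Matrix n n ℝ) (β δ : n → ℝ)
    (a : n) :
    ∫ ω, (∑ s ∈ range T, (s : ℝ) * ℓ s ω a) *
        ∑ t ∈ range T, ∑ i ∈ range t, ℓ t ω ⬝ᵥ lsaWeight A C β δ (ℓ i ω) ∂μ =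
      (∑ s ∈ range T, (s : ℝ) * s) * (S *ᵥ (A *ᵥ S *ᵥ β + δ)) a := by
  set w := lsaWeight A C β δ
  have hcross : ∀ s t i, i < t → ∫ ω, ℓ s ω a * (ℓ t ω ⬝ᵥ w (ℓ i ω)) ∂μ =
      if s = t then (S *ᵥ (A *ᵥ S *ᵥ β + δ)) a else 0 := fun s t i hit => by
    rw [integral_mul_dotProduct_lsaWeight hmeas hindep hbdd hmean hit.ne s, hmoment, hmoment]
  have hD : ∀ s t i : ℕ, Integrable (fun ω => (s : ℝ) * (ℓ s ω a * (ℓ t ω ⬝ᵥ w (ℓ i ω)))) μ :=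
    fun s t i => integrable_comp_of_abs_le hmeas hbdd
      (G := fun x => (s : ℝ) * (x s a * (x t ⬝ᵥ w (x i)))) (by fun_prop)
  simp only [Finset.sum_mul]
  simp only [Finset.mul_sum, mul_assoc]
  rw [integral_finsetSum _ fun s _ => integrable_finsetSum _ fun t _ =>
    integrable_finsetSum _ fun i _ => hD s t i]
  refine Finset.sum_congr rfl fun s hs => ?_
  rw [integral_finsetSum _ fun t _ => integrable_finsetSum _ fun i _ => hD s t i,
    Finset.sum_eq_single_of_mem s hs fun t _ hts => by
      rw [integral_finsetSum _ fun i _ => hD s t i]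
      exact Finset.sum_eq_zero fun i hi => by
        rw [integral_const_mul, hcross s t i (mem_range.1 hi), if_neg hts.symm, mul_zero],
    integral_finsetSum _ fun i _ => hD s s i,
    Finset.sum_congr rfl fun i hi => by
      rw [integral_const_mul, hcross s s i (mem_range.1 hi), if_pos rfl],
    sum_const, card_range, nsmul_eq_mul]

theorem integral_sum_mul_sqrt_sum_sq_eq_zero [Fintype n] {ℓ : ℕ → Ω → n → ℝ}
    (hmeas : ∀ i, Measurable (ℓ i)) (hindep : iIndepFun ℓ μ)
    (hsymm : ∀ i, μ.map (ℓ i) = μ.map (fun ω => -ℓ i ω)) (T : ℕ) (a : n) :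
    ∫ ω, (∑ s ∈ range T, (s : ℝ) * ℓ s ω a) * √(∑ c, (∑ t ∈ range T, ℓ t ω c) ^ 2) ∂μ = 0 :=
  integral_comp_eq_zero_of_map_neg (measurable_pi_lambda _ hmeas)
    (hindep.map_fun_eq_map_neg hmeas hsymm)
    (F := fun x => (∑ s ∈ range T, (s : ℝ) * x s a) * √(∑ c, (∑ t ∈ range T, x t c) ^ 2))
    (by fun_prop : Continuous _).measurable
    fun x => by simp only [Pi.neg_apply, Finset.sum_neg_distrib, mul_neg, neg_sq, neg_mul]

end

theorem sum_range_natCast_mul_self (T : ℕ) :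
    ∑ s ∈ range T, (s : ℝ) * s = T * (T - 1) * (2 * T - 1) / 6 := by
  induction T with
  | zero => simp
  | succ T ih => rw [sum_range_succ, ih]; push_cast; ring

theorem stmt_13_general {Ω : Type*} [MeasurableSpace Ω] (μ : Measure Ω) [IsProbabilityMeasure μ]
    (d T : ℕ)
    (ℓ : ℕ → Ω → Fin d → ℝ) (hmeas : ∀ i, Measurable (ℓ i))
    (hindep : iIndepFun ℓ μ)
    (hident : ∀ i, Measure.map (ℓ i) μ = Measure.map (ℓ 0) μ)
    (hsymm : ∀ i, Measure.map (ℓ i) μ = Measure.map (fun ω => -ℓ i ω) μ)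
    (Cb : ℝ) (hbdd : ∀ i ω a, |ℓ i ω a| ≤ Cb)
    (S : Matrix (Fin d) (Fin d) ℝ) (hS : ∀ a b, S a b = ∫ ω, ℓ 0 ω a * ℓ 0 ω b ∂μ)
    (A C : Matrix (Fin d) (Fin d) ℝ) (β δ : Fin d → ℝ) (R : ℝ) :
    (fun a : Fin d => ∫ ω, (∑ t ∈ range T, (t : ℝ) * ℓ t ω a) *
        ((∑ t ∈ range T, ∑ i ∈ range t,
            ℓ t ω ⬝ᵥ ((ℓ i ω ⬝ᵥ β) • (A *ᵥ ℓ i ω) + C *ᵥ ℓ i ω + δ)) +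
          R * Real.sqrt (∑ c, (∑ t ∈ range T, ℓ t ω c) ^ 2)) ∂μ) =
      (fun a : Fin d => ((T : ℝ) * ((T : ℝ) - 1) * (2 * (T : ℝ) - 1) / 6) *
        (((S * A * S) *ᵥ β) a + (S *ᵥ δ) a)) := by
  have hmean : ∀ i b, ∫ ω, ℓ i ω b ∂μ = 0 := fun i b =>
    integral_comp_eq_zero_of_map_neg (hmeas i) (hsymm i) (measurable_pi_apply b) fun _ => rfl
  have hmoment : ∀ i, secondMoment (ℓ i) μ = S := fun i => by
    ext a b
    rw [hS, secondMoment, of_apply]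
    exact (IdentDistrib.comp ⟨(hmeas i).aemeasurable, (hmeas 0).aemeasurable, hident i⟩
      (by fun_prop : Measurable fun z : Fin d → ℝ => z a * z b)).integral_eq
  funext a
  set X : Ω → ℝ := fun ω => ∑ s ∈ range T, (s : ℝ) * ℓ s ω a
  set Q : Ω → ℝ := fun ω => ∑ t ∈ range T, ∑ i ∈ range t, ℓ t ω ⬝ᵥ lsaWeight A C β δ (ℓ i ω)
  set N : Ω → ℝ := fun ω => √(∑ c, (∑ t ∈ range T, ℓ t ω c) ^ 2)
  have hXQ : Integrable (fun ω => X ω * Q ω) μ := integrable_comp_of_abs_le hmeas hbdd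
    (G := fun x => (∑ s ∈ range T, (s : ℝ) * x s a) *
      ∑ t ∈ range T, ∑ i ∈ range t, x t ⬝ᵥ lsaWeight A C β δ (x i)) (by fun_prop)
  have hXN : Integrable (fun ω => X ω * N ω) μ := integrable_comp_of_abs_le hmeas hbdd
    (G := fun x => (∑ s ∈ range T, (s : ℝ) * x s a) * √(∑ c, (∑ t ∈ range T, x t c) ^ 2))
    (by fun_prop)
  calc ∫ ω, X ω * (Q ω + R * N ω) ∂μ = ∫ ω, X ω * Q ω + R * (X ω * N ω) ∂μ := by
        congr with ω
        ring
    _ = _ := by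
        rw [integral_add hXQ (hXN.const_mul R), integral_const_mul,
          integral_sum_mul_sqrt_sum_sq_eq_zero hmeas hindep hsymm,
          integral_sum_mul_sum_dotProduct_lsaWeight hmeas hindep hbdd hmean hmoment,
          sum_range_natCast_mul_self]
        simp only [mul_zero, add_zero, mulVec_add, mulVec_mulVec, Pi.add_apply, Matrix.mul_assoc]

/-- Gradient computation with respect to the bias parameter `δ`: for i.i.d. bounded
symmetric losses, `E[(Σ_t (t−1)ℓ_t)·(Σ_t Σ_{i<t} ℓ_tᵀ(Aℓ_iℓ_iᵀβ + Cℓ_i + δ) + R‖Σ_t ℓ_t‖₂)]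
= (T(T−1)(2T−1)/6)·(ΣAΣβ + Σδ)` coordinatewise. -/
theorem stmt_13 {Ω : Type*} [MeasurableSpace Ω] (μ : Measure Ω) [IsProbabilityMeasure μ]
    (d T : ℕ) (hd : 0 < d) (hT : 2 ≤ T)
    (ℓ : ℕ → Ω → Fin d → ℝ) (hmeas : ∀ i, Measurable (ℓ i))
    (hindep : iIndepFun ℓ μ)
    (hident : ∀ i, Measure.map (ℓ i) μ = Measure.map (ℓ 0) μ)
    (hsymm : ∀ i, Measure.map (ℓ i) μ = Measure.map (fun ω => -ℓ i ω) μ)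
    (Cb : ℝ) (hbdd : ∀ i ω a, |ℓ i ω a| ≤ Cb)
    (S : Matrix (Fin d) (Fin d) ℝ) (hS : ∀ a b, S a b = ∫ ω, ℓ 0 ω a * ℓ 0 ω b ∂μ)
    (A C : Matrix (Fin d) (Fin d) ℝ) (β δ : Fin d → ℝ) (R : ℝ) (hR : 0 ≤ R) :
    (fun a : Fin d => ∫ ω, (∑ t ∈ range T, (t : ℝ) * ℓ t ω a) *
        ((∑ t ∈ range T, ∑ i ∈ range t,
            ℓ t ω ⬝ᵥ ((ℓ i ω ⬝ᵥ β) • (A *ᵥ ℓ i ω) + C *ᵥ ℓ i ω + δ)) +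
          R * Real.sqrt (∑ c, (∑ t ∈ range T, ℓ t ω c) ^ 2)) ∂μ) =
      (fun a : Fin d => ((T : ℝ) * ((T : ℝ) - 1) * (2 * (T : ℝ) - 1) / 6) *
        (((S * A * S) *ᵥ β) a + (S *ᵥ δ) a)) :=
  stmt_13_general μ d T ℓ hmeas hindep hident hsymm Cb hbdd S hS A C β δ R
end

section
/- Let T ≥ 2, R > 0, and let ℓ_1, …, ℓ_T be i.i.d. copies of a bounded random vector Z on ℝ^d that is symmetric about the origin (Z and −Z have the same distribution) with positive-definite covariance Σ := E[ZZᵀ]. For C ∈ ℝ^{d×d} define f(C) := E[ ( Σ_{t=1}^T Σ_{i=1}^{t−1} ℓ_tᵀ C ℓ_i + R ‖Σ_{t=1}^T ℓ_t‖₂ )² ]. Then f(C) = (T(T−1)/2) tr(Cᵀ Σ C Σ) + 2 tr(Cᵀ M) + R² E‖Σ_{t=1}^T ℓ_t‖₂², where M := R · E[ ‖Σ_{j=1}^T ℓ_j‖₂ · Σ_{t=1}^T Σ_{i=1}^{t−1} ℓ_t ℓ_iᵀ ], and f is uniquely minimized over ℝ^{d×d} at C* = −(2/(T(T−1))) Σ^{−1}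 M Σ^{−1}. -/
/-!
With `A_C = Σ_{i<t} ℓ_tᵀ C ℓ_i` and `N = ‖Σ_t ℓ_t‖₂`,
`f C = E[A_C²] + 2R E[A_C N] + R² E[N²]`. Expanding `A_C²` produces the moments
`E[ℓ_{t,a} ℓ_{i,b} ℓ_{s,c} ℓ_{j,e}]` with `i < t`, `j < s`. Unless `(t, i) = (s, j)` one of the
four indices occurs only once, and the moment vanishes since that `ℓ` is independent of the
others and centred by symmetry; each of the `T(T-1)/2` diagonal pairs contributes `tr(CᵀSCS)`,
where `S = E[ℓ ℓᵀ]`. The cross term is `2 tr(CᵀM)`, linear in `C`. The quadratic exceeds its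
value at its stationary point `C*` by `(T(T-1)/2) tr(DᵀSDS)` with `D = C - C*`, and
`tr(DᵀSDS) = vec(D)ᵀ (Sᵀ ⊗ S) vec(D) > 0` for `D ≠ 0`.
-/

open MeasureTheory ProbabilityTheory Finset Matrix

theorem Finset.sum_range_natCast_eq {K : Type*} [Field K] [CharZero K] (T : ℕ) :
    ∑ t ∈ range T, (t : K) = T * (T - 1) / 2 := by
  induction T with
  | zero => simp
  | succ T ih => rw [sum_range_succ, ih]; push_cast; ring

namespace Matrix

variable {n R : Type*} [Fintype n] [CommSemiring R]

theorem dotProduct_mulVec_eq_sum (C : Matrix n n R) (x y : n → R) :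
    x ⬝ᵥ (C *ᵥ y) = ∑ a, ∑ b, C a b * (x a * y b) := by
  simp only [dotProduct, mulVec, mul_sum]
  exact sum_congr rfl fun a _ => sum_congr rfl fun b _ => by ring

theorem dotProduct_mulVec_mul_dotProduct_mulVec (C : Matrix n n R) (x y u v : n → R) :
    x ⬝ᵥ (C *ᵥ y) * u ⬝ᵥ (C *ᵥ v) =
      ∑ a, ∑ b, ∑ c, ∑ e, C a b * C c e * (x a * y b * (u c * v e)) := by
  simp_rw [dotProduct_mulVec_eq_sum, sum_mul_sum]
  refine sum_congr rfl fun a _ => ?_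
  rw [sum_comm]
  exact sum_congr rfl fun b _ => sum_congr rfl fun c _ => sum_congr rfl fun e _ => by ring

theorem trace_transpose_mul_eq_sum (C M : Matrix n n R) :
    trace (Cᵀ * M) = ∑ a, ∑ b, C a b * M a b := by
  rw [← vec_dotProduct_vec, dotProduct, ← univ_product_univ, sum_product_right]
  rfl

theorem dotProduct_mulVec_eq_trace (C : Matrix n n R) (x y : n → R) :
    x ⬝ᵥ (C *ᵥ y) = trace (Cᵀ * vecMulVec x y) := by
  simp only [dotProduct_mulVec_eq_sum, trace_transpose_mul_eq_sum, vecMulVec_apply]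

theorem trace_transpose_mul_mul_mul_eq_sum (C S : Matrix n n R) :
    trace (Cᵀ * S * C * S) = ∑ a, ∑ b, ∑ c, ∑ e, C a b * C c e * (S a c * S e b) := by
  simp only [trace, diag, mul_apply, transpose_apply, sum_mul]
  conv_lhs => enter [2, b, 2, e]; rw [sum_comm]
  conv_lhs => enter [2, b]; rw [sum_comm]
  rw [sum_comm]
  refine sum_congr rfl fun a _ => sum_congr rfl fun b _ => ?_
  rw [sum_comm]
  exact sum_congr rfl fun c _ => sum_congr rfl fun e _ => by ring

open scoped Kronecker in
theorem trace_transpose_mul_mul_mul_pos {S : Matrix n n ℝ} (hS : S.PosDef) {D : Matrix n n ℝ}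
    (hD : D ≠ 0) : 0 < trace (Dᵀ * S * D * S) := by
  have h := (hS.transpose.kronecker hS).dotProduct_mulVec_pos (vec_eq_zero_iff.not.mpr hD)
  rwa [star_trivial, kronecker_mulVec_vec, transpose_transpose, vec_dotProduct_vec,
    ← Matrix.mul_assoc, ← Matrix.mul_assoc] at h

theorem IsSymm.trace_transpose_mul_mul_mul_comm {S : Matrix n n ℝ} (hS : S.IsSymm)
    (C D : Matrix n n ℝ) : trace (Cᵀ * S * D * S) = trace (Dᵀ * S * C * S) := by
  rw [← trace_transpose]
  simp only [transpose_mul, transpose_transpose, hS.eq, Matrix.mul_assoc]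
  rw [trace_mul_comm]
  simp only [Matrix.mul_assoc]

theorem trace_quadratic_lt_of_ne {S : Matrix n n ℝ} (hS : S.PosDef) {κ : ℝ} (hκ : 0 < κ)
    {M C₀ : Matrix n n ℝ} (hC₀ : κ • (S * C₀ * S) + M = 0) {C : Matrix n n ℝ}
    (hC : C ≠ C₀) :
    κ * trace (C₀ᵀ * S * C₀ * S) + 2 * trace (C₀ᵀ * M) <
      κ * trace (Cᵀ * S * C * S) + 2 * trace (Cᵀ * M) := by
  have hM : ∀ X : Matrix n n ℝ, trace (Xᵀ * M) = -(κ * trace (Xᵀ * S * C₀ * S)) := by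
    intro X
    rw [eq_neg_of_add_eq_zero_right hC₀, Matrix.mul_neg, Matrix.mul_smul, trace_neg, trace_smul,
      smul_eq_mul]
    simp only [Matrix.mul_assoc]
  have hsq : trace ((C - C₀)ᵀ * S * (C - C₀) * S) = trace (Cᵀ * S * C * S)
      - 2 * trace (Cᵀ * S * C₀ * S) + trace (C₀ᵀ * S * C₀ * S) := by
    simp only [transpose_sub, Matrix.sub_mul, Matrix.mul_sub, trace_sub,
      (isHermitian_iff_isSymm.mp hS.isHermitian).trace_transpose_mul_mul_mul_comm C₀ C]
    ring
  have hpos := trace_transpose_mul_mul_mul_pos hS (sub_ne_zero.mpr hC)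
  rw [hM, hM]
  nlinarith [mul_pos hκ hpos]

end Matrix

section

variable {Ω : Type*} [MeasurableSpace Ω] {μ : Measure Ω}

theorem MeasureTheory.integrable_comp_of_forall_mem [IsFiniteMeasure μ] {α : Type*}
    [TopologicalSpace α] [MeasurableSpace α] [OpensMeasurableSpace α] {X : Ω → α}
    (hX : Measurable X) {K : Set α} (hK : IsCompact K) (hXK : ∀ ω, X ω ∈ K) {φ : α → ℝ}
    (hφ : Continuous φ) : Integrable (fun ω => φ (X ω)) μ := by
  obtain ⟨B, hB⟩ := hK.exists_bound_of_continuousOn hφ.continuousOn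
  exact .of_bound (hφ.measurable.comp hX).aestronglyMeasurable B
    (ae_of_all _ fun ω => hB _ (hXK ω))

theorem ProbabilityTheory.IdentDistrib.integral_eq_zero_of_neg {Y : Ω → ℝ}
    (h : IdentDistrib Y (-Y) μ μ) : ∫ ω, Y ω ∂μ = 0 := by
  have := h.integral_eq
  rw [Pi.neg_def, integral_neg] at this
  linarith

namespace ProbabilityTheory

variable {n : Type*} {ℓ : ℕ → Ω → n → ℝ}

theorem integral_apply_eq_zero_of_map_neg (hmeas : ∀ i, Measurable (ℓ i))
    (hsymm : ∀ i, Measure.map (ℓ i) μ = Measure.map (fun ω => -ℓ i ω) μ)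
    (k : ℕ) (a : n) :
    ∫ ω, ℓ k ω a ∂μ = 0 :=
  IdentDistrib.integral_eq_zero_of_neg
    (IdentDistrib.comp ⟨(hmeas k).aemeasurable, (hmeas k).neg.aemeasurable, hsymm k⟩
      (measurable_pi_apply a))

theorem integral_mul_apply_eq_of_map_eq (hmeas : ∀ i, Measurable (ℓ i))
    (hident : ∀ i, Measure.map (ℓ i) μ = Measure.map (ℓ 0) μ) (k : ℕ) (a b : n) :
    ∫ ω, ℓ k ω a * ℓ k ω b ∂μ = ∫ ω, ℓ 0 ω a * ℓ 0 ω b ∂μ :=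
  (IdentDistrib.comp ⟨(hmeas k).aemeasurable, (hmeas 0).aemeasurable, hident k⟩
    ((measurable_pi_apply a).mul (measurable_pi_apply b))).integral_eq

theorem integral_apply_mul_eq_zero_of_ne (hmeas : ∀ i, Measurable (ℓ i))
    (hindep : iIndepFun ℓ μ)
    (hsymm : ∀ i, Measure.map (ℓ i) μ = Measure.map (fun ω => -ℓ i ω) μ)
    {k p q r : ℕ} (hp : p ≠ k) (hq : q ≠ k) (hr : r ≠ k) (a b c e : n) :
    ∫ ω, ℓ k ω a * (ℓ p ω b * ℓ q ω c * ℓ r ω e) ∂μ = 0 := by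
  have hdisj : Disjoint ({k} : Finset ℕ) {p, q, r} := by simp [hp.symm, hq.symm, hr.symm]
  have hind : IndepFun (fun ω => ℓ k ω a) (fun ω => ℓ p ω b * ℓ q ω c * ℓ r ω e) μ :=
    (hindep.indepFun_finset _ _ hdisj hmeas).comp
      (φ := fun v : ({k} : Finset ℕ) → n → ℝ => v ⟨k, mem_singleton_self k⟩ a)
      (ψ := fun v : ({p, q, r} : Finset ℕ) → n → ℝ =>
        v ⟨p, by simp⟩ b * v ⟨q, by simp⟩ c * v ⟨r, by simp⟩ e)
      (by fun_prop) (by fun_prop)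
  calc ∫ ω, ℓ k ω a * (ℓ p ω b * ℓ q ω c * ℓ r ω e) ∂μ
      = (∫ ω, ℓ k ω a ∂μ) * ∫ ω, ℓ p ω b * ℓ q ω c * ℓ r ω e ∂μ :=
        hind.integral_mul_eq_mul_integral (by fun_prop) (by fun_prop)
    _ = 0 := by rw [integral_apply_eq_zero_of_map_neg hmeas hsymm, zero_mul]

theorem integral_mul_mul_mul_eq_of_ne (hmeas : ∀ i, Measurable (ℓ i))
    (hindep : iIndepFun ℓ μ)
    (hident : ∀ i, Measure.map (ℓ i) μ = Measure.map (ℓ 0) μ) {k p : ℕ} (hkp : k ≠ p)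
    (a b c e : n) :
    ∫ ω, ℓ k ω a * ℓ k ω b * (ℓ p ω c * ℓ p ω e) ∂μ =
      (∫ ω, ℓ 0 ω a * ℓ 0 ω b ∂μ) * ∫ ω, ℓ 0 ω c * ℓ 0 ω e ∂μ := by
  have hind : IndepFun (fun ω => ℓ k ω a * ℓ k ω b) (fun ω => ℓ p ω c * ℓ p ω e) μ :=
    (hindep.indepFun hkp).comp (φ := fun v : n → ℝ => v a * v b)
      (ψ := fun v : n → ℝ => v c * v e) (by fun_prop) (by fun_prop)
  rw [← integral_mul_apply_eq_of_map_eq hmeas hident k,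
    ← integral_mul_apply_eq_of_map_eq hmeas hident p]
  exact hind.integral_mul_eq_mul_integral (by fun_prop) (by fun_prop)

theorem integral_fourth_moment (hmeas : ∀ i, Measurable (ℓ i)) (hindep : iIndepFun ℓ μ)
    (hident : ∀ i, Measure.map (ℓ i) μ = Measure.map (ℓ 0) μ)
    (hsymm : ∀ i, Measure.map (ℓ i) μ = Measure.map (fun ω => -ℓ i ω) μ)
    {S : Matrix n n ℝ} (hS : ∀ a b, S a b = ∫ ω, ℓ 0 ω a * ℓ 0 ω b ∂μ)
    {t i s j : ℕ} (hit : i < t) (hjs : j < s) (a b c e : n) :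
    ∫ ω, ℓ t ω a * ℓ i ω b * (ℓ s ω c * ℓ j ω e) ∂μ =
      if t = s ∧ i = j then S a c * S e b else 0 := by
  split_ifs with h
  · obtain ⟨rfl, rfl⟩ := h
    rw [hS, hS, ← integral_mul_mul_mul_eq_of_ne hmeas hindep hident hit.ne' a c e b]
    congr 1; ext ω; ring
  rcases lt_trichotomy t s with hts | rfl | hts
  · calc _ = ∫ ω, ℓ s ω c * (ℓ t ω a * ℓ i ω b * ℓ j ω e) ∂μ := by congr 1; ext ω; ring
      _ = 0 := integral_apply_mul_eq_zero_of_ne hmeas hindep hsymm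
        hts.ne (hit.trans hts).ne hjs.ne ..
  · have hij : i ≠ j := fun hij => h ⟨rfl, hij⟩
    calc _ = ∫ ω, ℓ i ω b * (ℓ t ω a * ℓ t ω c * ℓ j ω e) ∂μ := by
          congr 1; ext ω; ring
      _ = 0 := integral_apply_mul_eq_zero_of_ne hmeas hindep hsymm hit.ne' hit.ne' hij.symm ..
  · calc _ = ∫ ω, ℓ t ω a * (ℓ i ω b * ℓ s ω c * ℓ j ω e) ∂μ := by congr 1; ext ω; ring
      _ = 0 := integral_apply_mul_eq_zero_of_ne hmeas hindep hsymm
        hit.ne hts.ne (hjs.trans hts).ne ..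

variable [Fintype n] [IsFiniteMeasure μ]

theorem integrable_comp_of_abs_le (hmeas : ∀ i, Measurable (ℓ i))
    {Cb : ℝ} (hbdd : ∀ i ω a, |ℓ i ω a| ≤ Cb) {φ : (ℕ → n → ℝ) → ℝ}
    (hφ : Continuous φ) :
    Integrable (fun ω => φ (fun t => ℓ t ω)) μ :=
  integrable_comp_of_forall_mem (measurable_pi_lambda _ hmeas)
    (isCompact_univ_pi fun _ => isCompact_univ_pi fun _ => isCompact_Icc)
    (fun ω => Set.mem_univ_pi.2 fun t => Set.mem_univ_pi.2 fun a => abs_le.1 (hbdd t ω a)) hφ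

theorem integral_dotProduct_mulVec_mul (hmeas : ∀ i, Measurable (ℓ i))
    (hindep : iIndepFun ℓ μ) (hident : ∀ i, Measure.map (ℓ i) μ = Measure.map (ℓ 0) μ)
    (hsymm : ∀ i, Measure.map (ℓ i) μ = Measure.map (fun ω => -ℓ i ω) μ)
    {Cb : ℝ} (hbdd : ∀ i ω a, |ℓ i ω a| ≤ Cb)
    {S : Matrix n n ℝ} (hS : ∀ a b, S a b = ∫ ω, ℓ 0 ω a * ℓ 0 ω b ∂μ)
    (C : Matrix n n ℝ)
    {t i s j : ℕ} (hit : i < t) (hjs : j < s) :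
    ∫ ω, ℓ t ω ⬝ᵥ (C *ᵥ ℓ i ω) * ℓ s ω ⬝ᵥ (C *ᵥ ℓ j ω) ∂μ =
      if t = s ∧ i = j then trace (Cᵀ * S * C * S) else 0 := by
  have hint : ∀ a b c e,
      Integrable (fun ω => ℓ t ω a * ℓ i ω b * (ℓ s ω c * ℓ j ω e)) μ :=
    fun a b c e => integrable_comp_of_abs_le hmeas hbdd
      (φ := fun v => v t a * v i b * (v s c * v j e)) (by fun_prop)
  simp_rw [dotProduct_mulVec_mul_dotProduct_mulVec]
  simp (disch := intros; fun_prop) only [integral_finsetSum, integral_const_mul,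
    integral_fourth_moment hmeas hindep hident hsymm hS hit hjs]
  split_ifs
  · rw [trace_transpose_mul_mul_mul_eq_sum]
  · simp

theorem integral_sq_sum_dotProduct_mulVec (hmeas : ∀ i, Measurable (ℓ i))
    (hindep : iIndepFun ℓ μ) (hident : ∀ i, Measure.map (ℓ i) μ = Measure.map (ℓ 0) μ)
    (hsymm : ∀ i, Measure.map (ℓ i) μ = Measure.map (fun ω => -ℓ i ω) μ)
    {Cb : ℝ} (hbdd : ∀ i ω a, |ℓ i ω a| ≤ Cb)
    {S : Matrix n n ℝ} (hS : ∀ a b, S a b = ∫ ω, ℓ 0 ω a * ℓ 0 ω b ∂μ)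
    (C : Matrix n n ℝ)
    (T : ℕ) :
    ∫ ω, (∑ t ∈ range T, ∑ i ∈ range t, ℓ t ω ⬝ᵥ (C *ᵥ ℓ i ω)) ^ 2 ∂μ =
      (T * (T - 1) / 2 : ℝ) * trace (Cᵀ * S * C * S) := by
  have hint : ∀ t i s j,
      Integrable (fun ω => ℓ t ω ⬝ᵥ (C *ᵥ ℓ i ω) * ℓ s ω ⬝ᵥ (C *ᵥ ℓ j ω)) μ :=
    fun t i s j => integrable_comp_of_abs_le hmeas hbdd
      (φ := fun v => v t ⬝ᵥ (C *ᵥ v i) * v s ⬝ᵥ (C *ᵥ v j)) (by fun_prop)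
  have hmoment := fun {t i s j : ℕ} (hi : i ∈ range t) (hj : j ∈ range s) =>
    integral_dotProduct_mulVec_mul hmeas hindep hident hsymm hbdd hS C
      (mem_range.1 hi) (mem_range.1 hj)
  have hdiag : ∀ t ∈ range T, ∀ i ∈ range t, ∑ s ∈ range T, ∑ j ∈ range s,
      ∫ ω, ℓ t ω ⬝ᵥ (C *ᵥ ℓ i ω) * ℓ s ω ⬝ᵥ (C *ᵥ ℓ j ω) ∂μ = trace (Cᵀ * S * C * S) := by
    intro t ht i hi
    rw [sum_eq_single_of_mem t ht fun s _ hst => sum_eq_zero fun j hj => by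
        rw [hmoment hi hj, if_neg fun h => hst h.1.symm],
      sum_eq_single_of_mem i hi fun j hj hji => by
        rw [hmoment hi hj, if_neg fun h => hji h.2.symm],
      hmoment hi hi, if_pos ⟨rfl, rfl⟩]
  simp_rw [sq, sum_mul, mul_sum]
  simp (disch := intros; fun_prop) only [integral_finsetSum]
  rw [sum_congr rfl fun t ht => sum_congr rfl (hdiag t ht)]
  simp only [sum_const, card_range, nsmul_eq_mul, ← sum_mul, sum_range_natCast_eq]

theorem mul_integral_mul_sqrt_eq_trace (hmeas : ∀ i, Measurable (ℓ i))
    {Cb : ℝ} (hbdd : ∀ i ω a, |ℓ i ω a| ≤ Cb) {T : ℕ} {R : ℝ} {M : Matrix n n ℝ}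
    (hM : ∀ a b, M a b = R * ∫ ω, √(∑ c, (∑ t ∈ range T, ℓ t ω c) ^ 2) *
      (∑ t ∈ range T, ∑ i ∈ range t, ℓ t ω a * ℓ i ω b) ∂μ) (C : Matrix n n ℝ) :
    R * ∫ ω, (∑ t ∈ range T, ∑ i ∈ range t, ℓ t ω ⬝ᵥ (C *ᵥ ℓ i ω)) *
      √(∑ c, (∑ t ∈ range T, ℓ t ω c) ^ 2) ∂μ = trace (Cᵀ * M) := by
  have hint : ∀ a b, Integrable (fun ω => √(∑ c, (∑ t ∈ range T, ℓ t ω c) ^ 2) *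
      (∑ t ∈ range T, ∑ i ∈ range t, ℓ t ω a * ℓ i ω b)) μ := fun a b =>
    integrable_comp_of_abs_le hmeas hbdd
      (φ := fun v => √(∑ c, (∑ t ∈ range T, v t c) ^ 2) *
        (∑ t ∈ range T, ∑ i ∈ range t, v t a * v i b)) (by fun_prop)
  have hexp : ∀ ω, (∑ t ∈ range T, ∑ i ∈ range t, ℓ t ω ⬝ᵥ (C *ᵥ ℓ i ω)) *
      √(∑ c, (∑ t ∈ range T, ℓ t ω c) ^ 2) = ∑ a, ∑ b, C a b *
        (√(∑ c, (∑ t ∈ range T, ℓ t ω c) ^ 2) *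
          ∑ t ∈ range T, ∑ i ∈ range t, ℓ t ω a * ℓ i ω b) :=
    fun ω => by
      simp_rw [dotProduct_mulVec_eq_trace, ← trace_sum, ← Matrix.mul_sum,
        trace_transpose_mul_eq_sum, sum_mul, Matrix.sum_apply, vecMulVec_apply]
      exact sum_congr rfl fun a _ => sum_congr rfl fun b _ => by ring
  rw [trace_transpose_mul_eq_sum]
  simp_rw [hexp]
  simp (disch := intros; fun_prop) only [integral_finsetSum, integral_const_mul, hM]
  rw [mul_sum]
  refine sum_congr rfl fun a _ => ?_
  rw [mul_sum]
  exact sum_congr rfl fun b _ => by ring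

theorem integral_sq_add_mul_sqrt (hmeas : ∀ i, Measurable (ℓ i))
    (hindep : iIndepFun ℓ μ) (hident : ∀ i, Measure.map (ℓ i) μ = Measure.map (ℓ 0) μ)
    (hsymm : ∀ i, Measure.map (ℓ i) μ = Measure.map (fun ω => -ℓ i ω) μ)
    {Cb : ℝ} (hbdd : ∀ i ω a, |ℓ i ω a| ≤ Cb)
    {S : Matrix n n ℝ} (hS : ∀ a b, S a b = ∫ ω, ℓ 0 ω a * ℓ 0 ω b ∂μ) {T : ℕ} {R : ℝ}
    {M : Matrix n n ℝ}
    (hM : ∀ a b, M a b = R * ∫ ω, √(∑ c, (∑ t ∈ range T, ℓ t ω c) ^ 2) *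
      (∑ t ∈ range T, ∑ i ∈ range t, ℓ t ω a * ℓ i ω b) ∂μ) (C : Matrix n n ℝ) :
    ∫ ω, ((∑ t ∈ range T, ∑ i ∈ range t, ℓ t ω ⬝ᵥ (C *ᵥ ℓ i ω)) +
      R * √(∑ c, (∑ t ∈ range T, ℓ t ω c) ^ 2)) ^ 2 ∂μ =
      (T * (T - 1) / 2 : ℝ) * trace (Cᵀ * S * C * S) + 2 * trace (Cᵀ * M) +
        R ^ 2 * ∫ ω, ∑ c, (∑ t ∈ range T, ℓ t ω c) ^ 2 ∂μ := by
  have hA :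
      Integrable (fun ω => (∑ t ∈ range T, ∑ i ∈ range t, ℓ t ω ⬝ᵥ (C *ᵥ ℓ i ω)) ^ 2) μ :=
    integrable_comp_of_abs_le hmeas hbdd
      (φ := fun v => (∑ t ∈ range T, ∑ i ∈ range t, v t ⬝ᵥ (C *ᵥ v i)) ^ 2) (by fun_prop)
  have hAN : Integrable (fun ω => (∑ t ∈ range T, ∑ i ∈ range t, ℓ t ω ⬝ᵥ (C *ᵥ ℓ i ω)) *
      √(∑ c, (∑ t ∈ range T, ℓ t ω c) ^ 2)) μ :=
    integrable_comp_of_abs_le hmeas hbdd (φ := fun v => (∑ t ∈ range T, ∑ i ∈ range t,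
      v t ⬝ᵥ (C *ᵥ v i)) * √(∑ c, (∑ t ∈ range T, v t c) ^ 2)) (by fun_prop)
  have hN : Integrable (fun ω => ∑ c, (∑ t ∈ range T, ℓ t ω c) ^ 2) μ :=
    integrable_comp_of_abs_le hmeas hbdd (φ := fun v => ∑ c, (∑ t ∈ range T, v t c) ^ 2)
      (by fun_prop)
  have hexp : ∀ x z : ℝ, 0 ≤ z →
      (x + R * √z) ^ 2 = x ^ 2 + 2 * (R * (x * √z)) + R ^ 2 * z :=
    fun x z hz => by rw [add_sq, mul_pow, Real.sq_sqrt hz]; ring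
  simp (disch := positivity) only [hexp]
  simp (disch := fun_prop) only [integral_add, integral_const_mul]
  rw [integral_sq_sum_dotProduct_mulVec hmeas hindep hident hsymm hbdd hS,
    mul_integral_mul_sqrt_eq_trace hmeas hbdd hM]

end ProbabilityTheory

end

theorem stmt_14_general {Ω : Type*} [MeasurableSpace Ω] (μ : Measure Ω) [IsProbabilityMeasure μ]
    (d T : ℕ) (hT : 2 ≤ T) (R : ℝ)
    (ℓ : ℕ → Ω → Fin d → ℝ) (hmeas : ∀ i, Measurable (ℓ i))
    (hindep : iIndepFun ℓ μ)
    (hident : ∀ i, Measure.map (ℓ i) μ = Measure.map (ℓ 0) μ)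
    (hsymm : ∀ i, Measure.map (ℓ i) μ = Measure.map (fun ω => -ℓ i ω) μ)
    (Cb : ℝ) (hbdd : ∀ i ω a, |ℓ i ω a| ≤ Cb)
    (S : Matrix (Fin d) (Fin d) ℝ) (hS : ∀ a b, S a b = ∫ ω, ℓ 0 ω a * ℓ 0 ω b ∂μ)
    (hSpd : S.PosDef)
    (M : Matrix (Fin d) (Fin d) ℝ)
    (hM : ∀ a b, M a b = R * ∫ ω, Real.sqrt (∑ c, (∑ t ∈ range T, ℓ t ω c) ^ 2) *
      (∑ t ∈ range T, ∑ i ∈ range t, ℓ t ω a * ℓ i ω b) ∂μ)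
    (f : Matrix (Fin d) (Fin d) ℝ → ℝ)
    (hf : ∀ C, f C = ∫ ω, ((∑ t ∈ range T, ∑ i ∈ range t, ℓ t ω ⬝ᵥ (C *ᵥ ℓ i ω)) +
      R * Real.sqrt (∑ c, (∑ t ∈ range T, ℓ t ω c) ^ 2)) ^ 2 ∂μ) :
    (∀ C, f C = ((T : ℝ) * ((T : ℝ) - 1) / 2) * Matrix.trace (Cᵀ * S * C * S) +
        2 * Matrix.trace (Cᵀ * M) +
        R ^ 2 * ∫ ω, ∑ c, (∑ t ∈ range T, ℓ t ω c) ^ 2 ∂μ) ∧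
    (∀ C, C ≠ -((2 / ((T : ℝ) * ((T : ℝ) - 1))) • (S⁻¹ * M * S⁻¹)) →
      f (-((2 / ((T : ℝ) * ((T : ℝ) - 1))) • (S⁻¹ * M * S⁻¹))) < f C) := by
  have hf' : ∀ C, f C = ((T : ℝ) * ((T : ℝ) - 1) / 2) * trace (Cᵀ * S * C * S) +
      2 * trace (Cᵀ * M) + R ^ 2 * ∫ ω, ∑ c, (∑ t ∈ range T, ℓ t ω c) ^ 2 ∂μ := fun C =>
    (hf C).trans (integral_sq_add_mul_sqrt hmeas hindep hident hsymm hbdd hS hM C)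
  refine ⟨hf', fun C hC => ?_⟩
  have hT' : (2 : ℝ) ≤ T := by exact_mod_cast hT
  have hTT : 0 < (T : ℝ) * ((T : ℝ) - 1) := by nlinarith
  have hSMS : S * (S⁻¹ * M * S⁻¹) * S = M := by
    have hdet : IsUnit S.det := hSpd.det_pos.ne'.isUnit
    simp only [Matrix.mul_assoc, nonsing_inv_mul _ hdet, Matrix.mul_one,
      mul_nonsing_inv_cancel_left _ _ hdet]
  have hstat : ((T : ℝ) * ((T : ℝ) - 1) / 2) •
      (S * -((2 / ((T : ℝ) * ((T : ℝ) - 1))) • (S⁻¹ * M * S⁻¹)) * S) + M = 0 := by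
    rw [Matrix.mul_neg, Matrix.neg_mul, Matrix.mul_smul, Matrix.smul_mul, hSMS, smul_neg,
      smul_smul, ← inv_div, inv_mul_cancel₀ (div_pos two_pos hTT).ne', one_smul, neg_add_cancel]
  have := trace_quadratic_lt_of_ne hSpd (half_pos hTT) hstat hC
  rw [hf', hf']
  linarith

/-- The regret-loss, as a function of the linear predictor matrix `C`, equals the displayed
convex quadratic `(T(T−1)/2)tr(CᵀΣCΣ) + 2tr(CᵀM) + R²E‖Σ_t ℓ_t‖₂²`, and it is uniquely
minimized at `C* = −(2/(T(T−1))) Σ⁻¹ M Σ⁻¹`. -/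
theorem stmt_14 {Ω : Type*} [MeasurableSpace Ω] (μ : Measure Ω) [IsProbabilityMeasure μ]
    (d T : ℕ) (hd : 0 < d) (hT : 2 ≤ T) (R : ℝ) (hR : 0 < R)
    (ℓ : ℕ → Ω → Fin d → ℝ) (hmeas : ∀ i, Measurable (ℓ i))
    (hindep : iIndepFun ℓ μ)
    (hident : ∀ i, Measure.map (ℓ i) μ = Measure.map (ℓ 0) μ)
    (hsymm : ∀ i, Measure.map (ℓ i) μ = Measure.map (fun ω => -ℓ i ω) μ)
    (Cb : ℝ) (hbdd : ∀ i ω a, |ℓ i ω a| ≤ Cb)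
    (S : Matrix (Fin d) (Fin d) ℝ) (hS : ∀ a b, S a b = ∫ ω, ℓ 0 ω a * ℓ 0 ω b ∂μ)
    (hSpd : S.PosDef)
    (M : Matrix (Fin d) (Fin d) ℝ)
    (hM : ∀ a b, M a b = R * ∫ ω, Real.sqrt (∑ c, (∑ t ∈ range T, ℓ t ω c) ^ 2) *
      (∑ t ∈ range T, ∑ i ∈ range t, ℓ t ω a * ℓ i ω b) ∂μ)
    (f : Matrix (Fin d) (Fin d) ℝ → ℝ)
    (hf : ∀ C, f C = ∫ ω, ((∑ t ∈ range T, ∑ i ∈ range t, ℓ t ω ⬝ᵥ (C *ᵥ ℓ i ω)) +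
      R * Real.sqrt (∑ c, (∑ t ∈ range T, ℓ t ω c) ^ 2)) ^ 2 ∂μ) :
    (∀ C, f C = ((T : ℝ) * ((T : ℝ) - 1) / 2) * Matrix.trace (Cᵀ * S * C * S) +
        2 * Matrix.trace (Cᵀ * M) +
        R ^ 2 * ∫ ω, ∑ c, (∑ t ∈ range T, ℓ t ω c) ^ 2 ∂μ) ∧
    (∀ C, C ≠ -((2 / ((T : ℝ) * ((T : ℝ) - 1))) • (S⁻¹ * M * S⁻¹)) →
      f (-((2 / ((T : ℝ) * ((T : ℝ) - 1))) • (S⁻¹ * M * S⁻¹))) < f C) :=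
  stmt_14_general μ d T hT R ℓ hmeas hindep hident hsymm Cb hbdd S hS hSpd M hM f hf
end
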